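/- arXiv:2306.10527 — 10 statements merged into one kernel-verified Lean document; each statement's English description precedes it below -/
import Mathlib

section
/- Consider the dual-opinion co-evolution model on a two-island network (as defined in the context). Then: (i) for all t ≥ 0, any two individuals i, j belonging to the same group (both in V1 or both in V2) satisfy x_i(t) = x_j(t) and y_i(t) = y_j(t); (ii) for every i ∈ V1, j ∈ V2 and every t > 0, one has x_i(t) + x_j(t) = 1, y_i(t) + y_j(t) = 1, x_i(t) > y_i(t) > 1/2, and x_j(t) < y_j(t) < 1/2. -/
lemma sum_wy_const {V : Type*} [DecidableEq V] (s : Finset V) (wi yv : V → ℝ)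
    (c cv : ℝ) (hw : ∀ j, wi j = 0 ∨ wi j = 1) (hy : ∀ j ∈ s, yv j = c)
    (hcard : ((s.filter fun j => wi j = 1).card : ℝ) = cv) :
    ∑ j ∈ s, wi j * yv j = cv * c := by
  have h1 : ∑ j ∈ s, wi j * yv j = ∑ j ∈ s, (if wi j = 1 then (1:ℝ) else 0) * c := by
    refine Finset.sum_congr rfl fun j hj => ?_
    rcases hw j with h | h <;> simp [h, hy j hj]
  rw [h1, ← Finset.sum_mul, Finset.sum_boole, hcard]

lemma sum_w_card {V : Type*} [DecidableEq V] (s : Finset V) (wi : V → ℝ)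
    (cv : ℝ) (hw : ∀ j, wi j = 0 ∨ wi j = 1)
    (hcard : ((s.filter fun j => wi j = 1).card : ℝ) = cv) :
    ∑ j ∈ s, wi j = cv := by
  have := sum_wy_const s wi (fun _ => 1) 1 cv hw (fun j _ => rfl) hcard
  simpa using this

lemma step_lemma (b φ ps pd a c : ℝ)
    (hb : 0 < b) (hφ0 : 0 < φ) (hφ1 : φ < 1)
    (hpd : 0 < pd) (hpdps : pd < ps)
    (hc : 1/2 ≤ c) (hca : c ≤ a) (ha2 : 1/2 < a) (ha1 : a < 1) :
    1/2 < φ * (a^b*(ps*c + pd*(1-c)) /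
        (a^b*(ps*c + pd*(1-c)) + (1-a)^b*((ps+pd) - (ps*c + pd*(1-c))))) +
      (1-φ) * ((ps*c + pd*(1-c))/(ps+pd)) ∧
    φ * (a^b*(ps*c + pd*(1-c)) /
        (a^b*(ps*c + pd*(1-c)) + (1-a)^b*((ps+pd) - (ps*c + pd*(1-c))))) +
      (1-φ) * ((ps*c + pd*(1-c))/(ps+pd)) <
      a^b*(ps*c + pd*(1-c)) /
        (a^b*(ps*c + pd*(1-c)) + (1-a)^b*((ps+pd) - (ps*c + pd*(1-c)))) ∧
    a^b*(ps*c + pd*(1-c)) /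
        (a^b*(ps*c + pd*(1-c)) + (1-a)^b*((ps+pd) - (ps*c + pd*(1-c)))) < 1 := by
  set S := ps*c + pd*(1-c) with hSdef
  set D := ps + pd with hDdef
  have hc1 : c < 1 := lt_of_le_of_lt hca ha1
  have hS : 0 < S := by nlinarith
  have hDS : 0 < D - S := by nlinarith
  have hSD2 : D ≤ 2 * S := by nlinarith
  have hD : 0 < D := by linarith
  have h1a : 0 < 1 - a := by linarith
  have hpow : (1-a)^b < a^b := Real.rpow_lt_rpow (le_of_lt h1a) (by linarith) hb
  have hpowpos : 0 < (1-a)^b := Real.rpow_pos_of_pos h1a b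
  have hpowpos' : 0 < a^b := Real.rpow_pos_of_pos (by linarith) b
  set X := a^b * S with hXdef
  set Y := (1-a)^b * (D - S) with hYdef
  have hX : 0 < X := mul_pos hpowpos' hS
  have hY : 0 < Y := mul_pos hpowpos hDS
  have hXY : 0 < X + Y := by linarith
  have hXgtY : Y < X := by nlinarith
  have ha'1 : X / (X + Y) < 1 := by
    rw [div_lt_one hXY]; linarith
  have ha'2 : 1/2 < X / (X + Y) := by
    rw [lt_div_iff₀ hXY]; linarith
  have hSDa' : S / D < X / (X + Y) := by
    rw [div_lt_div_iff₀ hD hXY]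
    have key : 0 < S * (D - S) * (a^b - (1-a)^b) :=
      mul_pos (mul_pos hS hDS) (by linarith)
    have expand : X * D - S * (X + Y) = S * (D - S) * (a^b - (1-a)^b) := by
      rw [hXdef, hYdef]; ring
    linarith
  have hSD12 : 1/2 ≤ S / D := by
    rw [le_div_iff₀ hD]; linarith
  refine ⟨?_, ?_, ha'1⟩
  · nlinarith
  · nlinarith

/-- Theorem 1 of the paper: on a two-island network, under Assumption 1,
individuals in the same group have identical dual opinions; moreover for any
`t > 0`, opinions of individuals of opposing groups sum to one,
`x_i(t) > y_i(t) > 1/2` for `i ∈ V1` and `x_j(t) < y_j(t) < 1/2` for `j ∈ V2`. -/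
theorem stmt_0
    {V : Type*} [Fintype V] [DecidableEq V]
    (V1 V2 : Finset V) (n : ℕ) (ps pd : ℝ)
    (w : V → V → ℝ) (b φ x0 y0 : ℝ)
    (x y : ℕ → V → ℝ)
    (hn : 0 < n)
    (hdisj : Disjoint V1 V2) (huniv : V1 ∪ V2 = Finset.univ)
    (hcard1 : V1.card = n) (hcard2 : V2.card = n)
    (hpd0 : 0 < pd) (hpdps : pd < ps) (hps1 : ps < 1)
    (hint_s : ∃ k : ℕ, 0 < k ∧ (k : ℝ) = (n : ℝ) * ps)
    (hint_d : ∃ k : ℕ, 0 < k ∧ (k : ℝ) = (n : ℝ) * pd)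
    (hw01 : ∀ i j, w i j = 0 ∨ w i j = 1)
    (hsym : ∀ i j, w i j = w j i)
    (hdiag : ∀ i, w i i = 0)
    (hdeg11 : ∀ i ∈ V1, ((V1.filter fun j => w i j = 1).card : ℝ) = (n : ℝ) * ps)
    (hdeg12 : ∀ i ∈ V1, ((V2.filter fun j => w i j = 1).card : ℝ) = (n : ℝ) * pd)
    (hdeg22 : ∀ i ∈ V2, ((V2.filter fun j => w i j = 1).card : ℝ) = (n : ℝ) * ps)
    (hdeg21 : ∀ i ∈ V2, ((V1.filter fun j => w i j = 1).card : ℝ) = (n : ℝ) * pd)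
    (hb : 0 < b) (hφ : 0 < φ ∧ φ < 1)
    (hx0 : 1 / 2 < x0 ∧ x0 < 1) (hy0 : 1 / 2 ≤ y0 ∧ y0 ≤ x0)
    (hinit1 : ∀ i ∈ V1, x 0 i = x0 ∧ y 0 i = y0)
    (hinit2 : ∀ j ∈ V2, x 0 j = 1 - x0 ∧ y 0 j = 1 - y0)
    (hxupd : ∀ t : ℕ, ∀ i : V,
      x (t + 1) i = (x t i) ^ b * (∑ j, w i j * y t j) /
        ((x t i) ^ b * (∑ j, w i j * y t j) +
          (1 - x t i) ^ b * ((∑ j, w i j) - ∑ j, w i j * y t j)))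
    (hyupd : ∀ t : ℕ, ∀ i : V,
      y (t + 1) i = φ * x (t + 1) i +
        (1 - φ) * ((∑ j, w i j * y t j) / (∑ j, w i j))) :
    (∀ t : ℕ, ∀ i ∈ V1, ∀ j ∈ V1, x t i = x t j ∧ y t i = y t j) ∧
    (∀ t : ℕ, ∀ i ∈ V2, ∀ j ∈ V2, x t i = x t j ∧ y t i = y t j) ∧
    (∀ t : ℕ, 0 < t → ∀ i ∈ V1, ∀ j ∈ V2,
      x t i + x t j = 1 ∧ y t i + y t j = 1 ∧
      x t i > y t i ∧ y t i > 1 / 2 ∧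
      x t j < y t j ∧ y t j < 1 / 2) := by
  have hn0 : (n : ℝ) ≠ 0 := Nat.cast_ne_zero.mpr hn.ne'
  -- split of sums over the two islands
  have hsplit : ∀ f : V → ℝ, ∑ j, f j = ∑ j ∈ V1, f j + ∑ j ∈ V2, f j := by
    intro f
    rw [← huniv, Finset.sum_union hdisj]
  -- the main invariant
  have key : ∀ t : ℕ, ∃ a c : ℝ,
      1/2 ≤ c ∧ c ≤ a ∧ 1/2 < a ∧ a < 1 ∧ (0 < t → 1/2 < c ∧ c < a) ∧
      (∀ i ∈ V1, x t i = a ∧ y t i = c) ∧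
      (∀ j ∈ V2, x t j = 1 - a ∧ y t j = 1 - c) := by
    intro t
    induction t with
    | zero =>
        exact ⟨x0, y0, hy0.1, hy0.2, hx0.1, hx0.2, by simp, hinit1, hinit2⟩
    | succ t ih =>
        obtain ⟨a, c, hc, hca, ha2, ha1, _, h1, h2⟩ := ih
        have hc1 : c < 1 := lt_of_le_of_lt hca ha1
        set S := ps * c + pd * (1 - c) with hSdef
        set D := ps + pd with hDdef
        have hS : 0 < S := by nlinarith
        have hDS : 0 < D - S := by nlinarith
        have hD : 0 < D := by linarith
        have h1a : 0 < 1 - a := by linarith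
        have hpow : (1-a)^b < a^b := Real.rpow_lt_rpow (le_of_lt h1a) (by linarith) hb
        have hpowpos : 0 < (1-a)^b := Real.rpow_pos_of_pos h1a b
        have hpowpos' : 0 < a^b := Real.rpow_pos_of_pos (by linarith) b
        have hXY : 0 < a^b * S + (1-a)^b * (D - S) :=
          add_pos (mul_pos hpowpos' hS) (mul_pos hpowpos hDS)
        set a' := a^b * S / (a^b * S + (1-a)^b * (D - S)) with ha'def
        set c' := φ * a' + (1-φ) * (S / D) with hc'def
        -- sums for i ∈ V1
        have hsumy1 : ∀ i ∈ V1, ∑ j, w i j * y t j = (n : ℝ) * S := by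
          intro i hi
          rw [hsplit]
          rw [sum_wy_const V1 (w i) (y t) c ((n:ℝ)*ps) (hw01 i)
              (fun j hj => (h1 j hj).2) (hdeg11 i hi),
            sum_wy_const V2 (w i) (y t) (1-c) ((n:ℝ)*pd) (hw01 i)
              (fun j hj => (h2 j hj).2) (hdeg12 i hi)]
          rw [hSdef]; ring
        have hsumd1 : ∀ i ∈ V1, ∑ j, w i j = (n : ℝ) * D := by
          intro i hi
          rw [hsplit]
          rw [sum_w_card V1 (w i) ((n:ℝ)*ps) (hw01 i) (hdeg11 i hi),
            sum_w_card V2 (w i) ((n:ℝ)*pd) (hw01 i) (hdeg12 i hi)]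
          rw [hDdef]; ring
        have hsumy2 : ∀ i ∈ V2, ∑ j, w i j * y t j = (n : ℝ) * (D - S) := by
          intro i hi
          rw [hsplit]
          rw [sum_wy_const V1 (w i) (y t) c ((n:ℝ)*pd) (hw01 i)
              (fun j hj => (h1 j hj).2) (hdeg21 i hi),
            sum_wy_const V2 (w i) (y t) (1-c) ((n:ℝ)*ps) (hw01 i)
              (fun j hj => (h2 j hj).2) (hdeg22 i hi)]
          rw [hSdef, hDdef]; ring
        have hsumd2 : ∀ i ∈ V2, ∑ j, w i j = (n : ℝ) * D := by
          intro i hi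
          rw [hsplit]
          rw [sum_w_card V1 (w i) ((n:ℝ)*pd) (hw01 i) (hdeg21 i hi),
            sum_w_card V2 (w i) ((n:ℝ)*ps) (hw01 i) (hdeg22 i hi)]
          rw [hDdef]; ring
        -- update formulas
        have hx1 : ∀ i ∈ V1, x (t+1) i = a' := by
          intro i hi
          rw [hxupd t i, (h1 i hi).1, hsumy1 i hi, hsumd1 i hi]
          have hden : a^b * ((n:ℝ)*S) + (1-a)^b * ((n:ℝ)*D - (n:ℝ)*S)
              = (n:ℝ) * (a^b * S + (1-a)^b * (D - S)) := by ring
          rw [hden, show a^b * ((n:ℝ)*S) = (n:ℝ) * (a^b * S) by ring,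
            mul_div_mul_left _ _ hn0]
        have hy1 : ∀ i ∈ V1, y (t+1) i = c' := by
          intro i hi
          rw [hyupd t i, hsumy1 i hi, hsumd1 i hi, hx1 i hi,
            mul_div_mul_left _ _ hn0]
        have hx2 : ∀ j ∈ V2, x (t+1) j = 1 - a' := by
          intro j hj
          rw [hxupd t j, (h2 j hj).1, hsumy2 j hj, hsumd2 j hj]
          have h1m : (1 : ℝ) - (1 - a) = a := by ring
          rw [h1m]
          have hden : (1-a)^b * ((n:ℝ)*(D-S)) + a^b * ((n:ℝ)*D - (n:ℝ)*(D-S))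
              = (n:ℝ) * ((1-a)^b * (D-S) + a^b * S) := by ring
          rw [hden, show (1-a)^b * ((n:ℝ)*(D-S)) = (n:ℝ) * ((1-a)^b * (D-S)) by ring,
            mul_div_mul_left _ _ hn0, ha'def]
          rw [eq_sub_iff_add_eq, div_add_div _ _ (by positivity) hXY.ne']
          rw [div_eq_one_iff_eq (by positivity)]
          ring
        have hy2 : ∀ j ∈ V2, y (t+1) j = 1 - c' := by
          intro j hj
          rw [hyupd t j, hsumy2 j hj, hsumd2 j hj, hx2 j hj,
            mul_div_mul_left _ _ hn0, hc'def]
          have hfrac : (D - S) / D = 1 - S / D := by field_simp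
          rw [hfrac]; ring
        -- inequalities
        have hineq := step_lemma b φ ps pd a c hb hφ.1 hφ.2 hpd0 hpdps hc hca ha2 ha1
        rw [← hSdef, ← hDdef, ← ha'def, ← hc'def] at hineq
        obtain ⟨hi1, hi2, hi3⟩ := hineq
        exact ⟨a', c', le_of_lt hi1, le_of_lt hi2, lt_trans hi1 hi2, hi3,
          fun _ => ⟨hi1, hi2⟩, fun i hi => ⟨hx1 i hi, hy1 i hi⟩,
          fun j hj => ⟨hx2 j hj, hy2 j hj⟩⟩
  refine ⟨?_, ?_, ?_⟩
  · intro t i hi j hj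
    obtain ⟨a, c, _, _, _, _, _, h1, _⟩ := key t
    exact ⟨(h1 i hi).1.trans (h1 j hj).1.symm, (h1 i hi).2.trans (h1 j hj).2.symm⟩
  · intro t i hi j hj
    obtain ⟨a, c, _, _, _, _, _, _, h2⟩ := key t
    exact ⟨(h2 i hi).1.trans (h2 j hj).1.symm, (h2 i hi).2.trans (h2 j hj).2.symm⟩
  · intro t ht i hi j hj
    obtain ⟨a, c, _, _, _, _, hstrict, h1, h2⟩ := key t
    obtain ⟨hc2, hca⟩ := hstrict ht
    rw [(h1 i hi).1, (h1 i hi).2, (h2 j hj).1, (h2 j hj).2]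
    refine ⟨by ring, by ring, hca, hc2, by linarith, by linarith⟩
end

section
/- Consider two dual-opinion scalar systems (x¹, y¹) and (x², y²) with parameter tuples P1 = (y0¹, φ¹, b¹, h¹) and P2 = (y0², φ², b², h²), each satisfying the standing assumptions (y0^k ∈ [1/2, x0], φ^k ∈ (0,1), b^k > 0, h^k > 1), with the same initial implicit opinion x¹(0) = x²(0) = x0 ∈ (1/2,1). If P1 > P2 componentwise (y0¹ > y0², φ¹ > φ², b¹ > b², h¹ > h²), then for all t > 0 one has x¹(t) ≥ x²(t) and y¹(t) ≥ y²(t). -/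
open Filter Topology

/-- Aggregate explicit opinion received from the in-group side:
`A(y) = h·y + 1 - y`. -/
noncomputable def A (h y : ℝ) : ℝ := h * y + 1 - y

/-- Aggregate explicit opinion received from the out-group side:
`B(y) = y + h·(1 - y)`. -/
noncomputable def B (h y : ℝ) : ℝ := y + h * (1 - y)

lemma A_pos' {h y : ℝ} (hh : 1 < h) (hy : 0 ≤ y) : 0 < A h y := by
  unfold A; nlinarith

lemma B_pos' {h y : ℝ} (hh : 1 < h) (hy0 : 0 ≤ y) (hy1 : y ≤ 1) : 0 < B h y := by
  unfold B; nlinarith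

/-- one-step bounds on the x-update -/
lemma xstep_bounds' {h b x y : ℝ} (hh : 1 < h) (hb : 0 < b)
    (hx1 : 1/2 < x) (hx2 : x < 1) (hy1 : 1/2 ≤ y) (hy2 : y < 1) :
    1/2 < x ^ b * A h y / (x ^ b * A h y + (1 - x) ^ b * B h y) ∧
    x ^ b * A h y / (x ^ b * A h y + (1 - x) ^ b * B h y) < 1 ∧
    A h y / (h + 1) ≤ x ^ b * A h y / (x ^ b * A h y + (1 - x) ^ b * B h y) := by
  have hA : 0 < A h y := A_pos' hh (by linarith)
  have hB : 0 < B h y := B_pos' hh (by linarith) (by linarith)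
  have hAB : B h y ≤ A h y := by unfold A B; nlinarith
  have hxp : (0:ℝ) < x := by linarith
  have h1x : (0:ℝ) ≤ 1 - x := by linarith
  have hpow : (1 - x) ^ b < x ^ b := Real.rpow_lt_rpow h1x (by linarith) hb
  have hpw0 : (0:ℝ) < x ^ b := Real.rpow_pos_of_pos hxp b
  have hpw1 : (0:ℝ) < (1 - x) ^ b := Real.rpow_pos_of_pos (by linarith) b
  set u := x ^ b * A h y with hu
  set v := (1 - x) ^ b * B h y with hv
  have hupos : 0 < u := mul_pos hpw0 hA
  have hvpos : 0 < v := mul_pos hpw1 hB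
  have hvu : v < u := by
    calc v ≤ (1 - x) ^ b * A h y := by exact mul_le_mul_of_nonneg_left hAB hpw1.le
    _ < u := by exact mul_lt_mul_of_pos_right hpow hA
  have hden : 0 < u + v := by linarith
  refine ⟨?_, ?_, ?_⟩
  · rw [lt_div_iff₀ hden]; linarith
  · rw [div_lt_one hden]; linarith
  · rw [div_le_div_iff₀ (by linarith) hden]
    have hsum : A h y + B h y = h + 1 := by unfold A B; ring
    have key : A h y * v ≤ u * B h y := by
      rw [hu, hv]
      nlinarith [mul_nonneg (mul_nonneg hA.le hB.le) (sub_nonneg.2 hpow.le)]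
    nlinarith

lemma key2' {h1 y1 h2 y2 : ℝ} (hh2 : 1 < h2) (hh : h2 ≤ h1)
    (hy2 : 1/2 ≤ y2) (hy : y2 ≤ y1) :
    A h2 y2 * B h1 y1 ≤ A h1 y1 * B h2 y2 := by
  unfold A B
  nlinarith [mul_nonneg (mul_nonneg (by linarith : (0:ℝ) ≤ h1 - 1) (by linarith : (0:ℝ) ≤ h2 + 1)) (by linarith : (0:ℝ) ≤ y1 - y2),
    mul_nonneg (by linarith : (0:ℝ) ≤ h1 - h2) (by linarith : (0:ℝ) ≤ 2*y2 - 1)]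

lemma g_mono' {h1 y1 h2 y2 : ℝ} (hh2 : 1 < h2) (hh : h2 ≤ h1)
    (hy2 : 1/2 ≤ y2) (hy : y2 ≤ y1) :
    A h2 y2 / (h2 + 1) ≤ A h1 y1 / (h1 + 1) := by
  rw [div_le_div_iff₀ (by linarith) (by linarith)]
  unfold A
  nlinarith [mul_nonneg (mul_nonneg (by linarith : (0:ℝ) ≤ h1 - 1) (by linarith : (0:ℝ) ≤ h2 + 1)) (by linarith : (0:ℝ) ≤ y1 - y2),
    mul_nonneg (by linarith : (0:ℝ) ≤ h1 - h2) (by linarith : (0:ℝ) ≤ 2*y2 - 1)]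

lemma xstep_mono' {h1 b1 x1 y1 h2 b2 x2 y2 : ℝ}
    (hh2 : 1 < h2) (hh : h2 ≤ h1) (hb2 : 0 < b2) (hb : b2 ≤ b1)
    (hx2 : 1/2 < x2) (hx : x2 ≤ x1) (hx1 : x1 < 1)
    (hy2 : 1/2 ≤ y2) (hy : y2 ≤ y1) (hy1 : y1 < 1) :
    x2 ^ b2 * A h2 y2 / (x2 ^ b2 * A h2 y2 + (1 - x2) ^ b2 * B h2 y2) ≤
    x1 ^ b1 * A h1 y1 / (x1 ^ b1 * A h1 y1 + (1 - x1) ^ b1 * B h1 y1) := by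
  have hh1 : 1 < h1 := by linarith
  have hA1 : 0 < A h1 y1 := A_pos' hh1 (by linarith)
  have hA2 : 0 < A h2 y2 := A_pos' hh2 (by linarith)
  have hB1 : 0 < B h1 y1 := B_pos' hh1 (by linarith) (by linarith)
  have hB2 : 0 < B h2 y2 := B_pos' hh2 (by linarith) (by linarith)
  have hx1p : (0:ℝ) < x1 := by linarith
  have hx2p : (0:ℝ) < x2 := by linarith
  have h1x1 : (0:ℝ) < 1 - x1 := by linarith
  have h1x2 : (0:ℝ) < 1 - x2 := by linarith
  have hp1 : (0:ℝ) < x1 ^ b1 := Real.rpow_pos_of_pos hx1p b1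
  have hp2 : (0:ℝ) < x2 ^ b2 := Real.rpow_pos_of_pos hx2p b2
  have hq1 : (0:ℝ) < (1 - x1) ^ b1 := Real.rpow_pos_of_pos h1x1 b1
  have hq2 : (0:ℝ) < (1 - x2) ^ b2 := Real.rpow_pos_of_pos h1x2 b2
  have ha1 : (1 - x1)/x1 ≤ (1 - x2)/x2 := by
    rw [div_le_div_iff₀ hx1p hx2p]; nlinarith
  have ha2le1 : (1 - x2)/x2 ≤ 1 := by
    rw [div_le_one hx2p]; linarith
  have hr : ((1 - x1)/x1) ^ b1 ≤ ((1 - x2)/x2) ^ b2 := by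
    calc ((1 - x1)/x1) ^ b1 ≤ ((1 - x2)/x2) ^ b1 :=
          Real.rpow_le_rpow (by positivity) ha1 (by linarith)
      _ ≤ ((1 - x2)/x2) ^ b2 :=
          Real.rpow_le_rpow_of_exponent_ge (by positivity) ha2le1 hb
  rw [Real.div_rpow h1x1.le hx1p.le, Real.div_rpow h1x2.le hx2p.le,
    div_le_div_iff₀ hp1 hp2] at hr
  have key : A h2 y2 * B h1 y1 ≤ A h1 y1 * B h2 y2 := key2' hh2 hh hy2 hy
  have hden1 : 0 < x1 ^ b1 * A h1 y1 + (1 - x1) ^ b1 * B h1 y1 := by positivity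
  have hden2 : 0 < x2 ^ b2 * A h2 y2 + (1 - x2) ^ b2 * B h2 y2 := by positivity
  rw [div_le_div_iff₀ hden2 hden1]
  have main : x2 ^ b2 * A h2 y2 * ((1 - x1) ^ b1 * B h1 y1) ≤
      x1 ^ b1 * A h1 y1 * ((1 - x2) ^ b2 * B h2 y2) := by
    have := mul_le_mul hr key (by positivity) (by positivity)
    nlinarith [this]
  nlinarith [main]

/-- Invariant of the dynamics: `x` stays in `(1/2, 1)` and `y` in `[1/2, 1)`. -/
lemma invariant' (h φ b : ℝ) (x y : ℕ → ℝ) (hh : 1 < h) (hφ : 0 < φ ∧ φ < 1)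
    (hb : 0 < b) (hx0 : 1/2 < x 0 ∧ x 0 < 1) (hy0 : 1/2 ≤ y 0 ∧ y 0 < 1)
    (hxupd : ∀ t : ℕ, x (t + 1) =
      (x t) ^ b * A h (y t) /
        ((x t) ^ b * A h (y t) + (1 - x t) ^ b * B h (y t)))
    (hyupd : ∀ t : ℕ, y (t + 1) =
      φ * x (t + 1) + (1 - φ) * (A h (y t) / (h + 1))) :
    ∀ t : ℕ, (1/2 < x t ∧ x t < 1) ∧ (1/2 ≤ y t ∧ y t < 1) := by
  intro t
  induction t with
  | zero => exact ⟨hx0, hy0⟩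
  | succ n ih =>
    obtain ⟨⟨hx1, hx2⟩, ⟨hy1, hy2⟩⟩ := ih
    have hxb := xstep_bounds' hh hb hx1 hx2 hy1 hy2
    rw [← hxupd n] at hxb
    have hg1 : 1/2 ≤ A h (y n) / (h + 1) := by
      rw [le_div_iff₀ (by linarith)]; unfold A; nlinarith
    have hg2 : A h (y n) / (h + 1) < 1 := by
      rw [div_lt_one (by linarith)]; unfold A; nlinarith
    refine ⟨⟨hxb.1, hxb.2.1⟩, ?_, ?_⟩
    · rw [hyupd n]; nlinarith [hxb.1, hφ.1, hφ.2]
    · rw [hyupd n]; nlinarith [hxb.2.1, hφ.1, hφ.2]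

/-- Theorem 5 of the paper (comparison of parameter settings): two copies of
the scalar dual-opinion system with the same initial implicit opinion `x0` and
componentwise strictly larger parameters `(y0, φ, b, h)` produce pointwise
larger implicit and explicit opinions for all `t > 0`. -/
theorem stmt_4 (h1 φ1 b1 h2 φ2 b2 x0 : ℝ) (x1 y1 x2 y2 : ℕ → ℝ)
    (hh1 : 1 < h1) (hφ1 : 0 < φ1 ∧ φ1 < 1)
    (hh2 : 1 < h2) (hφ2 : 0 < φ2 ∧ φ2 < 1)
    (hb1 : 0 < b1) (hb2 : 0 < b2)
    (hx0 : 1 / 2 < x0 ∧ x0 < 1)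
    (hx10 : x1 0 = x0) (hx20 : x2 0 = x0)
    (hy10 : 1 / 2 ≤ y1 0 ∧ y1 0 ≤ x0) (hy20 : 1 / 2 ≤ y2 0 ∧ y2 0 ≤ x0)
    (hxupd1 : ∀ t : ℕ, x1 (t + 1) =
      (x1 t) ^ b1 * A h1 (y1 t) /
        ((x1 t) ^ b1 * A h1 (y1 t) + (1 - x1 t) ^ b1 * B h1 (y1 t)))
    (hyupd1 : ∀ t : ℕ, y1 (t + 1) =
      φ1 * x1 (t + 1) + (1 - φ1) * (A h1 (y1 t) / (h1 + 1)))
    (hxupd2 : ∀ t : ℕ, x2 (t + 1) =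
      (x2 t) ^ b2 * A h2 (y2 t) /
        ((x2 t) ^ b2 * A h2 (y2 t) + (1 - x2 t) ^ b2 * B h2 (y2 t)))
    (hyupd2 : ∀ t : ℕ, y2 (t + 1) =
      φ2 * x2 (t + 1) + (1 - φ2) * (A h2 (y2 t) / (h2 + 1)))
    (hP : y2 0 < y1 0 ∧ φ2 < φ1 ∧ b2 < b1 ∧ h2 < h1) :
    ∀ t : ℕ, 0 < t → x2 t ≤ x1 t ∧ y2 t ≤ y1 t := by
  have inv1 := invariant' h1 φ1 b1 x1 y1 hh1 hφ1 hb1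
    (by rw [hx10]; exact hx0) ⟨hy10.1, by linarith [hy10.2, hx0.2]⟩ hxupd1 hyupd1
  have inv2 := invariant' h2 φ2 b2 x2 y2 hh2 hφ2 hb2
    (by rw [hx20]; exact hx0) ⟨hy20.1, by linarith [hy20.2, hx0.2]⟩ hxupd2 hyupd2
  have main : ∀ t : ℕ, x2 t ≤ x1 t ∧ y2 t ≤ y1 t := by
    intro t
    induction t with
    | zero => exact ⟨by rw [hx10, hx20], hP.1.le⟩
    | succ n ih =>
      obtain ⟨hxle, hyle⟩ := ih
      obtain ⟨⟨hx11, hx12⟩, ⟨hy11, hy12⟩⟩ := inv1 n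
      obtain ⟨⟨hx21, hx22⟩, ⟨hy21, hy22⟩⟩ := inv2 n
      have hxstep : x2 (n + 1) ≤ x1 (n + 1) := by
        rw [hxupd1 n, hxupd2 n]
        exact xstep_mono' hh2 hP.2.2.2.le hb2 hP.2.2.1.le hx21 hxle hx12 hy21 hyle hy12
      refine ⟨hxstep, ?_⟩
      -- y comparison
      have hxb1 := xstep_bounds' hh1 hb1 hx11 hx12 hy11 hy12
      rw [← hxupd1 n] at hxb1
      have hg : A h2 (y2 n) / (h2 + 1) ≤ A h1 (y1 n) / (h1 + 1) :=
        g_mono' hh2 hP.2.2.2.le hy21 hyle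
      rw [hyupd1 n, hyupd2 n]
      nlinarith [mul_nonneg hφ2.1.le (sub_nonneg.2 hxstep),
        mul_nonneg (by linarith [hP.2.1] : (0:ℝ) ≤ φ1 - φ2) (sub_nonneg.2 hxb1.2.2),
        mul_nonneg (by linarith [hφ2.2] : (0:ℝ) ≤ 1 - φ2) (sub_nonneg.2 hg)]
  exact fun t _ => main t
end

section
/- For every b ∈ (0,1), the function x ↦ g(x,b) is continuous on [1/2, 1); in particular, lim_{x → (1/2)⁺} (x^{1-b} - (1-x)^{1-b}) / (x·(1-x)^{1-b} - (1-x)·x^{1-b}) = 2/b - 2 = g(1/2, b). -/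
open Filter Topology

/-- The function `g(x,b)` of the paper, for `b ∈ (0,1)`:
`g(x,b) = (x^{1-b} - (1-x)^{1-b}) / (x·(1-x)^{1-b} - (1-x)·x^{1-b})` for
`x ∈ (1/2,1)` and `g(1/2,b) = 2/b - 2`. -/
noncomputable def g (x b : ℝ) : ℝ :=
  if x = 1 / 2 then 2 / b - 2
  else (x ^ (1 - b) - (1 - x) ^ (1 - b)) /
    (x * (1 - x) ^ (1 - b) - (1 - x) * x ^ (1 - b))

/-!
With `p = 1 - b`, numerator and denominator of `g` both vanish at `x = 1/2`, so the limit there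
is the ratio of their derivatives, `2p (1/2)^(p-1) / ((1-p) (1/2)^(p-1)) = 2/b - 2`. On `(1/2, 1)`
the denominator factors as `x^p (1-x)^p (x^(1-p) - (1-x)^(1-p)) > 0`, so `g` is continuous there
as a quotient of continuous functions.
-/

open Real

theorem HasDerivAt.tendsto_div_nhdsNE {𝕜 : Type*} [NontriviallyNormedField 𝕜] {u v : 𝕜 → 𝕜}
    {u' v' a : 𝕜} (hu : HasDerivAt u u' a) (hv : HasDerivAt v v' a) (hua : u a = 0)
    (hva : v a = 0) (hv' : v' ≠ 0) :
    Tendsto (fun x => u x / v x) (𝓝[≠] a) (𝓝 (u' / v')) := by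
  refine ((hasDerivAt_iff_tendsto_slope.mp hu).div
    (hasDerivAt_iff_tendsto_slope.mp hv) hv').congr' ?_
  filter_upwards [self_mem_nhdsWithin] with x hx
  rw [Pi.div_apply, slope_def_field, slope_def_field, hua, hva, sub_zero, sub_zero,
    div_div_div_cancel_right₀ (sub_ne_zero.mpr hx)]

noncomputable def gNum (p x : ℝ) : ℝ := x ^ p - (1 - x) ^ p

noncomputable def gDen (p x : ℝ) : ℝ := x * (1 - x) ^ p - (1 - x) * x ^ p

theorem gNum_half (p : ℝ) : gNum p (1 / 2) = 0 := by norm_num [gNum]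

theorem gDen_half (p : ℝ) : gDen p (1 / 2) = 0 := by norm_num [gDen]

theorem continuous_gNum {p : ℝ} (hp : 0 ≤ p) : Continuous (gNum p) := by
  unfold gNum; fun_prop (disch := exact hp)

theorem continuous_gDen {p : ℝ} (hp : 0 ≤ p) : Continuous (gDen p) := by
  unfold gDen; fun_prop (disch := exact hp)

theorem hasDerivAt_gNum_half (p : ℝ) :
    HasDerivAt (gNum p) (2 * p * (1 / 2) ^ (p - 1)) (1 / 2) := by
  have hx := hasDerivAt_rpow_const (x := (1 / 2 : ℝ)) (p := p) (Or.inl (by norm_num))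
  have h1x := ((hasDerivAt_id' (1 / 2 : ℝ)).const_sub 1).rpow_const (p := p)
    (Or.inl (by norm_num))
  exact (hx.sub h1x).congr_deriv (by norm_num; ring)

theorem hasDerivAt_gDen_half (p : ℝ) :
    HasDerivAt (gDen p) ((1 - p) * (1 / 2) ^ (p - 1)) (1 / 2) := by
  have hx := hasDerivAt_rpow_const (x := (1 / 2 : ℝ)) (p := p) (Or.inl (by norm_num))
  have hsub := (hasDerivAt_id' (1 / 2 : ℝ)).const_sub 1
  have h1x := hsub.rpow_const (p := p) (Or.inl (by norm_num))
  have hhalf : (1 / 2 : ℝ) ^ p = (1 / 2) ^ (p - 1) * (1 / 2) := by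
    rw [← rpow_add_one (by norm_num), sub_add_cancel]
  exact (((hasDerivAt_id' _).mul h1x).sub (hsub.mul hx)).congr_deriv
    (by norm_num [hhalf]; ring)

theorem gDen_pos {p x : ℝ} (hp : p < 1) (hx : 1 / 2 < x) (hx1 : x < 1) : 0 < gDen p x := by
  have hx0 : 0 < x := by linarith
  have h1x : 0 < 1 - x := by linarith
  have ex : x ^ p * x ^ (1 - p) = x := by rw [← rpow_add hx0, add_sub_cancel, rpow_one]
  have e1x : (1 - x) ^ p * (1 - x) ^ (1 - p) = 1 - x := by
    rw [← rpow_add h1x, add_sub_cancel, rpow_one]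
  have hfactor : gDen p x = x ^ p * (1 - x) ^ p * (x ^ (1 - p) - (1 - x) ^ (1 - p)) := by
    unfold gDen; linear_combination x ^ p * e1x - (1 - x) ^ p * ex
  have hlt : (1 - x) ^ (1 - p) < x ^ (1 - p) := rpow_lt_rpow h1x.le (by linarith) (by linarith)
  rw [hfactor]
  exact mul_pos (by positivity) (sub_pos.mpr hlt)

theorem tendsto_gNum_div_gDen_half {p : ℝ} (hp : p ≠ 1) :
    Tendsto (fun x => gNum p x / gDen p x) (𝓝[≠] (1 / 2)) (𝓝 (2 * p / (1 - p))) := by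
  have hc : (0 : ℝ) < (1 / 2) ^ (p - 1) := by positivity
  have := (hasDerivAt_gNum_half p).tendsto_div_nhdsNE (hasDerivAt_gDen_half p) (gNum_half p)
    (gDen_half p) (mul_ne_zero (sub_ne_zero.mpr hp.symm) hc.ne')
  rwa [mul_div_mul_right _ _ hc.ne'] at this

theorem g_eq_update (b : ℝ) : (fun x => g x b) =
    Function.update (fun x => gNum (1 - b) x / gDen (1 - b) x) (1 / 2) (2 / b - 2) := by
  funext x
  simp only [g, Function.update_apply, gNum, gDen]

/-- Lemma 2(i) of the paper: for every `b ∈ (0,1)` the map `x ↦ g(x,b)` is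
continuous on `[1/2, 1)`; in particular the defining expression of `g` tends to
`2/b - 2 = g(1/2,b)` as `x → 1/2⁺`. -/
theorem stmt_5 (b : ℝ) (hb : 0 < b ∧ b < 1) :
    ContinuousOn (fun x => g x b) (Set.Ico (1 / 2 : ℝ) 1) ∧
    Filter.Tendsto
      (fun x : ℝ => (x ^ (1 - b) - (1 - x) ^ (1 - b)) /
        (x * (1 - x) ^ (1 - b) - (1 - x) * x ^ (1 - b)))
      (nhdsWithin (1 / 2 : ℝ) (Set.Ioi (1 / 2 : ℝ)))
      (nhds (2 / b - 2)) ∧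
    g (1 / 2) b = 2 / b - 2 := by
  obtain ⟨hb0, hb1⟩ := hb
  have hlim : Tendsto (fun x => gNum (1 - b) x / gDen (1 - b) x) (𝓝[≠] (1 / 2))
      (𝓝 (2 / b - 2)) := by
    convert tendsto_gNum_div_gDen_half (p := 1 - b) (by linarith) using 2
    rw [sub_sub_cancel]
    field_simp
  refine ⟨?_, hlim.mono_left (nhdsWithin_mono _ fun x hx => ne_of_gt hx), by simp [g]⟩
  rw [g_eq_update]
  refine continuousOn_of_forall_continuousAt fun x hx => ?_
  rcases hx.1.eq_or_lt with rfl | hx1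
  · exact continuousAt_update_same.mpr hlim
  · have hq := (continuous_gNum (p := 1 - b) (by linarith)).continuousAt.div
      (continuous_gDen (p := 1 - b) (by linarith)).continuousAt
      (gDen_pos (by linarith) hx1 hx.2).ne'
    refine hq.congr ?_
    filter_upwards [eventually_ne_nhds hx1.ne'] with y hy
    rw [Function.update_of_ne hy, Pi.div_apply]
end

section
/- The function g is monotone in each variable: (i) for every fixed b ∈ (0,1), g(·,b) is strictly increasing on [1/2, 1), i.e., if 1/2 ≤ x1 < x2 < 1 then g(x1,b) < g(x2,b); (ii) for every fixed x ∈ [1/2, 1), g(x,·) is nonincreasing on (0,1), i.e., if 0 < b1 < b2 < 1 then g(x,b1) ≥ g(x,b2). -/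
/-!
Put `t = x / (1 - x)`, which increases from `1` to `∞` on `[1/2, 1)`, and `s = 1 - b`. Then
`g x b = (1 + t) (t^s - 1) / (t - t^s)`, whose `t`-derivative has the sign of
`s (t - t⁻¹) - (t^s - t^(-s)) = 2 (s sinh u - sinh (s u))` with `t = exp u`, positive because
`s cosh u - s cosh (s u) > 0` makes `s sinh u - sinh (s u)` increase from `0`. The value
`g (1/2) b = 2/b - 2` is the limit as `t → 1⁺`, because `(t^s - 1) / (t - 1) → s`, so strict
monotonicity extends to `x = 1/2`.
In `b`, only `t^s` moves, decreasing with `b`, and `v ↦ (v - 1) / (t - v)` is increasing.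
-/

open Real Set Filter Topology

lemma sinh_mul_lt_mul_sinh {s u : ℝ} (hs0 : 0 < s) (hs1 : s < 1) (hu : 0 < u) :
    sinh (s * u) < s * sinh u := by
  have hderiv (v : ℝ) : HasDerivAt (fun v => s * sinh v - sinh (s * v))
      (s * cosh v - s * cosh (s * v)) v := by
    have := ((hasDerivAt_sinh v).const_mul s).sub
      ((hasDerivAt_sinh (s * v)).comp v ((hasDerivAt_id v).const_mul s))
    exact this.congr_deriv (by ring)
  have hmono : StrictMonoOn (fun v => s * sinh v - sinh (s * v)) (Ici 0) := by
    refine strictMonoOn_of_deriv_pos (convex_Ici 0)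
      (fun v _ => (hderiv v).continuousAt.continuousWithinAt) fun v hv => ?_
    rw [interior_Ici, mem_Ioi] at hv
    have hcosh : cosh (s * v) < cosh v := by
      rw [cosh_lt_cosh, abs_of_pos (mul_pos hs0 hv), abs_of_pos hv]
      nlinarith
    rw [(hderiv v).deriv, ← mul_sub]
    exact mul_pos hs0 (sub_pos.2 hcosh)
  simpa using hmono self_mem_Ici hu.le hu

lemma rpow_sub_rpow_neg_lt {s t : ℝ} (hs0 : 0 < s) (hs1 : s < 1) (ht : 1 < t) :
    t ^ s - t ^ (-s) < s * (t - t⁻¹) := by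
  have ht0 : 0 < t := one_pos.trans ht
  have key := sinh_mul_lt_mul_sinh hs0 hs1 (log_pos ht)
  rw [sinh_eq, sinh_eq, exp_neg (log t), exp_log ht0] at key
  rw [rpow_def_of_pos ht0, rpow_def_of_pos ht0, mul_neg, mul_comm (log t)]
  linarith

lemma StrictMonoOn.lt_of_tendsto_nhdsGT {α β : Type*} [LinearOrder α] [TopologicalSpace α]
    [OrderTopology α] [DenselyOrdered α] [LinearOrder β] [TopologicalSpace β]
    [ClosedIicTopology β] {f : α → β} {a t : α} {L : β} (hf : StrictMonoOn f (Ioi a))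
    (hL : Tendsto f (𝓝[>] a) (𝓝 L)) (ht : a < t) : L < f t := by
  obtain ⟨m, ham, hmt⟩ := exists_between ht
  have hne : (𝓝[>] a).NeBot := nhdsGT_neBot_of_exists_gt ⟨t, ht⟩
  have hLm : L ≤ f m := le_of_tendsto hL <| mem_of_superset (Ioo_mem_nhdsGT ham)
    fun y hy => (hf hy.1 ham hy.2).le
  exact hLm.trans_lt (hf ham (ham.trans hmt) hmt)

lemma div_one_sub_strictMonoOn : StrictMonoOn (fun x : ℝ => x / (1 - x)) (Iio 1) := by
  intro x hx y hy hxy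
  simp only [mem_Iio] at hx hy
  rw [div_lt_div_iff₀ (sub_pos.2 hx) (sub_pos.2 hy)]
  nlinarith

lemma one_lt_div_one_sub {x : ℝ} (hx : 1 / 2 < x) (hx1 : x < 1) : 1 < x / (1 - x) := by
  rw [one_lt_div (sub_pos.2 hx1)]
  linarith

noncomputable def gReparam (b t : ℝ) : ℝ :=
  (1 + t) * (t ^ (1 - b) - 1) / (t - t ^ (1 - b))

lemma g_eq_gReparam {x b : ℝ} (hx : 1 / 2 < x) (hx1 : x < 1) (hb0 : 0 < b) :
    g x b = gReparam b (x / (1 - x)) := by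
  have hy : 0 < 1 - x := sub_pos.2 hx1
  have ht := one_lt_div_one_sub hx hx1
  have hxt : x = x / (1 - x) * (1 - x) := (div_mul_cancel₀ x hy.ne').symm
  have hyt : (1 - x) * (1 + x / (1 - x)) = 1 := by field_simp; ring
  rw [g, if_neg hx.ne', gReparam]
  generalize x / (1 - x) = t at ht hxt hyt ⊢
  generalize 1 - x = y at hy hxt hyt ⊢
  subst hxt
  have htb := rpow_lt_self_of_one_lt ht (sub_lt_self 1 hb0)
  have hden : t * y * y ^ (1 - b) - y * (t ^ (1 - b) * y ^ (1 - b)) ≠ 0 := by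
    rw [show t * y * y ^ (1 - b) - y * (t ^ (1 - b) * y ^ (1 - b))
      = y * y ^ (1 - b) * (t - t ^ (1 - b)) by ring]
    exact (mul_pos (mul_pos hy (rpow_pos_of_pos hy _)) (sub_pos.2 htb)).ne'
  rw [mul_rpow (one_pos.trans ht).le hy.le, div_eq_div_iff hden (sub_pos.2 htb).ne']
  linear_combination (-(y ^ (1 - b) * (t ^ (1 - b) - 1) * (t - t ^ (1 - b)))) * hyt

lemma gReparam_strictMonoOn {b : ℝ} (hb0 : 0 < b) (hb1 : b < 1) :
    StrictMonoOn (gReparam b) (Ioi 1) := by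
  have hden (t : ℝ) (ht : 1 < t) : 0 < t - t ^ (1 - b) :=
    sub_pos.2 (rpow_lt_self_of_one_lt ht (sub_lt_self 1 hb0))
  have hderiv (t : ℝ) (ht : 1 < t) : HasDerivAt (gReparam b)
      (t ^ (1 - b) * ((1 - b) * (t - t⁻¹) - (t ^ (1 - b) - t ^ (-(1 - b))))
        / (t - t ^ (1 - b)) ^ 2) t := by
    have ht0 : 0 < t := one_pos.trans ht
    have hpow := hasDerivAt_rpow_const (p := 1 - b) (Or.inl ht0.ne')
    have := (((hasDerivAt_id t).const_add 1).mul (hpow.sub_const 1)).div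
      ((hasDerivAt_id t).sub hpow) (hden t ht).ne'
    refine this.congr_deriv ?_
    simp only [Pi.sub_apply, Pi.mul_apply, id]
    rw [rpow_sub_one ht0.ne', rpow_neg ht0.le]
    field_simp
    ring
  refine strictMonoOn_of_deriv_pos (convex_Ioi 1)
    (fun t ht => (hderiv t ht).continuousAt.continuousWithinAt) fun t ht => ?_
  rw [interior_Ioi] at ht
  rw [(hderiv t ht).deriv]
  have hkey := rpow_sub_rpow_neg_lt (by linarith : 0 < 1 - b) (by linarith) ht
  exact div_pos (mul_pos (rpow_pos_of_pos (one_pos.trans ht) _) (sub_pos.2 hkey))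
    (pow_pos (hden t ht) 2)

lemma tendsto_gReparam_nhdsGT_one {b : ℝ} (hb0 : 0 < b) :
    Tendsto (gReparam b) (𝓝[>] 1) (𝓝 (2 / b - 2)) := by
  have hslope : Tendsto (slope (fun t : ℝ => t ^ (1 - b)) 1) (𝓝[>] 1) (𝓝 (1 - b)) := by
    have := (hasDerivAt_rpow_const (x := 1) (p := 1 - b) (Or.inl one_ne_zero)).tendsto_slope
    rw [one_rpow, mul_one] at this
    exact this.mono_left (nhdsWithin_mono _ fun t ht => ne_of_gt ht)
  have hid : Tendsto (fun t : ℝ => 1 + t) (𝓝[>] 1) (𝓝 (1 + 1)) :=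
    tendsto_nhdsWithin_of_tendsto_nhds (continuous_const.add continuous_id).continuousAt
  have hlim := (hid.mul hslope).div (tendsto_const_nhds.sub hslope)
    (by linarith : (1 : ℝ) - (1 - b) ≠ 0)
  rw [show (1 + 1) * (1 - b) / (1 - (1 - b)) = 2 / b - 2 by
    rw [sub_sub_cancel]; field_simp; ring] at hlim
  refine hlim.congr' (eventually_nhdsWithin_of_forall fun t (ht : 1 < t) => ?_)
  have ht1 : t - 1 ≠ 0 := by linarith
  simp only [Pi.div_apply, slope_def_field, gReparam, one_rpow]
  rw [one_sub_div ht1, ← mul_div_assoc, div_div_div_cancel_right₀ ht1, sub_sub_sub_cancel_right]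

lemma gReparam_antitoneOn {t : ℝ} (ht : 1 < t) :
    AntitoneOn (fun b => gReparam b t) (Ioo 0 1) := by
  intro b1 hb1 b2 hb2 h12
  have hle : t ^ (1 - b2) ≤ t ^ (1 - b1) := rpow_le_rpow_of_exponent_le ht.le (by linarith)
  have h1 : 1 < t ^ (1 - b2) := one_lt_rpow ht (by linarith [hb2.2])
  have h2 := rpow_lt_self_of_one_lt ht (sub_lt_self 1 hb1.1)
  simp only [gReparam, mul_div_assoc]
  gcongr
  all_goals linarith

lemma g_half (b : ℝ) : g (1 / 2) b = 2 / b - 2 := if_pos rfl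

/-- Lemma 2(ii) of the paper: `g(·,b)` is strictly increasing on `[1/2,1)`
for each fixed `b ∈ (0,1)`, and `g(x,·)` is nonincreasing in `b ∈ (0,1)` for
each fixed `x ∈ [1/2,1)`. -/
theorem stmt_6 :
    (∀ b : ℝ, 0 < b → b < 1 →
      ∀ x1 x2 : ℝ, 1 / 2 ≤ x1 → x1 < x2 → x2 < 1 → g x1 b < g x2 b) ∧
    (∀ x : ℝ, 1 / 2 ≤ x → x < 1 →
      ∀ b1 b2 : ℝ, 0 < b1 → b1 < b2 → b2 < 1 → g x b2 ≤ g x b1) := by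
  refine ⟨fun b hb0 hb1 x1 x2 hx1 h12 hx2 => ?_, fun x hx hx1 b1 b2 hb1 h12 hb2 => ?_⟩
  · have hx2' : 1 / 2 < x2 := hx1.trans_lt h12
    rw [g_eq_gReparam hx2' hx2 hb0]
    rcases hx1.eq_or_lt with rfl | hx1'
    · rw [g_half]
      exact (gReparam_strictMonoOn hb0 hb1).lt_of_tendsto_nhdsGT
        (tendsto_gReparam_nhdsGT_one hb0) (one_lt_div_one_sub hx2' hx2)
    · rw [g_eq_gReparam hx1' (h12.trans hx2) hb0]
      exact gReparam_strictMonoOn hb0 hb1 (one_lt_div_one_sub hx1' (h12.trans hx2))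
        (one_lt_div_one_sub hx2' hx2) (div_one_sub_strictMonoOn (h12.trans hx2) hx2 h12)
  · rcases hx.eq_or_lt with rfl | hx'
    · rw [g_half, g_half]
      gcongr
    · rw [g_eq_gReparam hx' hx1 hb1, g_eq_gReparam hx' hx1 (hb1.trans h12)]
      exact gReparam_antitoneOn (one_lt_div_one_sub hx' hx1) ⟨hb1, h12.trans hb2⟩
        ⟨hb1.trans h12, hb2⟩ h12.le
end

section
/- Let φ ∈ (0,1], h > 1, and suppose 2/(φ·(h-1)+2) < b < 1. Then the equation g(x,b) = φ·(h-1) has exactly one solution x̂(φ,h,b) in the open interval (1/2, 1). -/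
open Real Set Filter Topology

theorem existsUnique_zero_of_strictAntiOn_of_strictMonoOn {f : ℝ → ℝ} {a t b : ℝ}
    (hat : a < t) (htb : t < b) (hanti : StrictAntiOn f (Icc a t))
    (hmono : StrictMonoOn f (Ico t b)) (hcont : ContinuousOn f (Ico t b))
    (hfa : f a = 0) (hlim : Tendsto f (𝓝[<] b) atTop) :
    ∃! x, x ∈ Ioo a b ∧ f x = 0 := by
  have hft : f t < 0 := hfa ▸ hanti (left_mem_Icc.mpr hat.le) (right_mem_Icc.mpr hat.le) hat
  obtain ⟨y, hfy, hy⟩ :=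
    ((hlim.eventually_gt_atTop 0).and (Ioo_mem_nhdsLT htb)).exists
  obtain ⟨x, hx, hfx⟩ :=
    intermediate_value_Ioo hy.1.le (hcont.mono (Icc_subset_Ico_right hy.2)) ⟨hft, hfy⟩
  refine ⟨x, ⟨⟨hat.trans hx.1, hx.2.trans hy.2⟩, hfx⟩, ?_⟩
  rintro z ⟨hz, hfz⟩
  have htz : t ≤ z := by
    by_contra! hzt
    have := hanti (left_mem_Icc.mpr hat.le) ⟨hz.1.le, hzt.le⟩ hz.1
    linarith
  exact hmono.injOn ⟨htz, hz.2⟩ ⟨hx.1.le, hx.2.trans hy.2⟩ (hfz.trans hfx.symm)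

noncomputable def logResidual (c b x : ℝ) : ℝ :=
  (1 - b) * log x - (1 - b) * log (1 - x) + log (1 + c * (1 - x)) - log (1 + c * x)

def slopeNumerator (c b x : ℝ) : ℝ :=
  (1 - b) * (1 + c) - x * (1 - x) * (c * (2 + b * c))

section

variable {c b x : ℝ}

theorem logResidual_half : logResidual c b (1 / 2) = 0 := by
  norm_num [logResidual]

theorem hasDerivAt_logResidual (hc : 0 ≤ c) (hx : x ∈ Ioo 0 1) :
    HasDerivAt (logResidual c b)
      (slopeNumerator c b x / (x * (1 - x) * ((1 + c * (1 - x)) * (1 + c * x)))) x := by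
  obtain ⟨hx0, hx1⟩ := hx
  have h1x : 0 < 1 - x := by linarith
  have hcx' : 0 < 1 + c * (1 - x) := by positivity
  have hcx : 0 < 1 + c * x := by positivity
  have hsub : HasDerivAt (fun y : ℝ ↦ 1 - y) (-1) x := by
    simpa using (hasDerivAt_id x).const_sub 1
  have hlog₁ := ((hasDerivAt_log hx0.ne').const_mul (1 - b)).sub
    ((hsub.log h1x.ne').const_mul (1 - b))
  have hlog₂ := ((hsub.const_mul c).const_add 1).log hcx'.ne'
  have hlog₃ := (((hasDerivAt_id x).const_mul c).const_add 1).log hcx.ne'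
  refine (((hlog₁.add hlog₂).sub hlog₃ : HasDerivAt (logResidual c b) _ x)).congr_deriv ?_
  simp only [slopeNumerator, id]
  field_simp
  ring

theorem slopeDenominator_pos (hc : 0 ≤ c) (hx : x ∈ Ioo 0 1) :
    0 < x * (1 - x) * ((1 + c * (1 - x)) * (1 + c * x)) := by
  obtain ⟨hx0, hx1⟩ := hx
  have h1x : 0 < 1 - x := by linarith
  positivity

theorem continuousOn_logResidual (hc : 0 ≤ c) : ContinuousOn (logResidual c b) (Ioo 0 1) :=
  fun _ hx ↦ (hasDerivAt_logResidual hc hx).continuousAt.continuousWithinAt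

theorem strictMonoOn_slopeNumerator (hc : 0 < c) (hb : 0 < b) :
    StrictMonoOn (slopeNumerator c b) (Ici (1 / 2)) := by
  intro x hx y _ hxy
  have hxy' : y * (1 - y) < x * (1 - x) := by nlinarith [mem_Ici.mp hx]
  have : 0 < c * (2 + b * c) := by positivity
  simp only [slopeNumerator]
  nlinarith

theorem slopeNumerator_half_neg (hc : 0 < c) (hbc : 2 < b * (c + 2)) :
    slopeNumerator c b (1 / 2) < 0 := by
  simp only [slopeNumerator]
  nlinarith

theorem slopeNumerator_one_pos (hb : b < 1) (hc : 0 ≤ c) : 0 < slopeNumerator c b 1 := by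
  simp only [slopeNumerator]
  nlinarith

theorem exists_slopeNumerator_eq_zero (hc : 0 < c) (hb : b < 1) (hbc : 2 < b * (c + 2)) :
    ∃ t ∈ Ioo (1 / 2 : ℝ) 1, slopeNumerator c b t = 0 := by
  have hcont : ContinuousOn (slopeNumerator c b) (Icc (1 / 2) 1) := by
    unfold slopeNumerator
    fun_prop
  exact intermediate_value_Ioo (by norm_num) hcont
    ⟨slopeNumerator_half_neg hc hbc, slopeNumerator_one_pos hb hc.le⟩

theorem tendsto_logResidual_atTop (hc : 0 ≤ c) (hb : b < 1) :
    Tendsto (logResidual c b) (𝓝[<] 1) atTop := by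
  have hlog : Tendsto (fun x : ℝ ↦ log (1 - x)) (𝓝[<] 1) atBot := by
    refine tendsto_log_nhdsGT_zero.comp (tendsto_nhdsWithin_of_tendsto_nhds_of_eventually_within
      _ ?_ ?_)
    · exact tendsto_nhdsWithin_of_tendsto_nhds
        (by simpa using (continuous_sub_left (1 : ℝ)).tendsto 1)
    · filter_upwards [self_mem_nhdsWithin] with x hx
      exact sub_pos.mpr (mem_Iio.mp hx)
  have hrest : Tendsto (fun x : ℝ ↦ (1 - b) * log x + log (1 + c * (1 - x)) - log (1 + c * x))
      (𝓝[<] 1) (𝓝 ((1 - b) * log 1 + log (1 + c * (1 - 1)) - log (1 + c * 1))) := by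
    apply tendsto_nhdsWithin_of_tendsto_nhds
    apply ContinuousAt.tendsto
    have : (1 : ℝ) + c * 1 ≠ 0 := by positivity
    fun_prop (disch := norm_num [this])
  convert ((hlog.const_mul_atBot_of_neg (neg_neg_of_pos (sub_pos.mpr hb))).atTop_add hrest)
    using 1
  ext x
  simp only [logResidual]
  ring

theorem strictAntiOn_logResidual (hc : 0 < c) (hb : 0 < b) {t : ℝ}
    (ht : t ∈ Ioo (1 / 2 : ℝ) 1) (hzero : slopeNumerator c b t = 0) :
    StrictAntiOn (logResidual c b) (Icc (1 / 2) t) := by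
  have hsub : Icc (1 / 2) t ⊆ Ioo 0 1 := fun x hx ↦ ⟨by linarith [hx.1], hx.2.trans_lt ht.2⟩
  refine strictAntiOn_of_deriv_neg (convex_Icc _ _) ((continuousOn_logResidual hc.le).mono hsub)
    fun x hx ↦ ?_
  rw [interior_Icc] at hx
  have hx01 := hsub (Ioo_subset_Icc_self hx)
  rw [(hasDerivAt_logResidual hc.le hx01).deriv]
  refine div_neg_of_neg_of_pos ?_ (slopeDenominator_pos hc.le hx01)
  exact hzero ▸ strictMonoOn_slopeNumerator hc hb (mem_Ici.mpr hx.1.le) (mem_Ici.mpr ht.1.le) hx.2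

theorem strictMonoOn_logResidual (hc : 0 < c) (hb : 0 < b) {t : ℝ}
    (ht : t ∈ Ioo (1 / 2 : ℝ) 1) (hzero : slopeNumerator c b t = 0) :
    StrictMonoOn (logResidual c b) (Ico t 1) := by
  have hsub : Ico t 1 ⊆ Ioo 0 1 := fun x hx ↦ ⟨by linarith [hx.1, ht.1], hx.2⟩
  refine strictMonoOn_of_deriv_pos (convex_Ico _ _) ((continuousOn_logResidual hc.le).mono hsub)
    fun x hx ↦ ?_
  rw [interior_Ico] at hx
  have hx01 := hsub (Ioo_subset_Ico_self hx)
  rw [(hasDerivAt_logResidual hc.le hx01).deriv]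
  refine div_pos ?_ (slopeDenominator_pos hc.le hx01)
  exact hzero ▸ strictMonoOn_slopeNumerator hc hb (mem_Ici.mpr ht.1.le)
    (mem_Ici.mpr (ht.1.trans hx.1).le) hx.1

theorem g_denominator_pos (hb : 0 < b) (hx : x ∈ Ioo (1 / 2 : ℝ) 1) :
    0 < x * (1 - x) ^ (1 - b) - (1 - x) * x ^ (1 - b) := by
  obtain ⟨hx2, hx1⟩ := hx
  have hx0 : 0 < x := by linarith
  have h1x : 0 < 1 - x := by linarith
  have hpow : (1 - x) ^ b < x ^ b := rpow_lt_rpow h1x.le (by linarith) hb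
  have hsplit (y : ℝ) (hy : 0 < y) : y ^ b * y ^ (1 - b) = y := by
    rw [← rpow_add hy, add_sub_cancel, rpow_one]
  refine sub_pos.mpr ?_
  calc (1 - x) * x ^ (1 - b)
      = (1 - x) ^ b * ((1 - x) ^ (1 - b) * x ^ (1 - b)) := by rw [← mul_assoc, hsplit _ h1x]
    _ < x ^ b * ((1 - x) ^ (1 - b) * x ^ (1 - b)) := by gcongr
    _ = x * (1 - x) ^ (1 - b) := by rw [mul_left_comm, hsplit _ hx0, mul_comm]

theorem logResidual_eq_log_sub_log (hc : 0 ≤ c) (hx : x ∈ Ioo 0 1) :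
    logResidual c b x =
      log (x ^ (1 - b) * (1 + c * (1 - x))) - log ((1 - x) ^ (1 - b) * (1 + c * x)) := by
  obtain ⟨hx0, hx1⟩ := hx
  have h1x : 0 < 1 - x := by linarith
  rw [log_mul (by positivity) (by positivity), log_mul (by positivity) (by positivity),
    log_rpow hx0, log_rpow h1x, logResidual]
  ring

theorem g_eq_iff_logResidual_eq_zero (hb : 0 < b) (hc : 0 ≤ c) (hx : x ∈ Ioo (1 / 2 : ℝ) 1) :
    g x b = c ↔ logResidual c b x = 0 := by
  have hx01 : x ∈ Ioo 0 1 := ⟨by linarith [hx.1], hx.2⟩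
  have hx0 : 0 < x := hx01.1
  have h1x : 0 < 1 - x := by linarith [hx.2]
  rw [g, if_neg hx.1.ne', div_eq_iff (g_denominator_pos hb hx).ne',
    logResidual_eq_log_sub_log hc hx01, sub_eq_zero,
    log_injOn_pos.eq_iff (mem_Ioi.mpr (by positivity))
      (mem_Ioi.mpr (by positivity))]
  constructor <;> intro h <;> linarith

end

theorem existsUnique_logResidual_eq_zero {c b : ℝ} (hc : 0 < c) (hb : b < 1)
    (hbc : 2 < b * (c + 2)) : ∃! x, x ∈ Ioo (1 / 2 : ℝ) 1 ∧ logResidual c b x = 0 := by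
  have hb0 : 0 < b := by nlinarith
  obtain ⟨t, ht, hzero⟩ := exists_slopeNumerator_eq_zero hc hb hbc
  exact existsUnique_zero_of_strictAntiOn_of_strictMonoOn ht.1 ht.2
    (strictAntiOn_logResidual hc hb0 ht hzero) (strictMonoOn_logResidual hc hb0 ht hzero)
    ((continuousOn_logResidual hc.le).mono fun _ hx ↦ ⟨by linarith [hx.1, ht.1], hx.2⟩)
    logResidual_half (tendsto_logResidual_atTop hc.le hb)

/-- Lemma 2(iii) of the paper: for `φ ∈ (0,1]`, `h > 1` and
`2/(φ(h-1)+2) < b < 1`, the equation `g(x,b) = φ(h-1)` has exactly one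
solution in `(1/2, 1)`. -/
theorem stmt_7 (φ h b : ℝ) (hφ : 0 < φ ∧ φ ≤ 1) (hh : 1 < h)
    (hb : 2 / (φ * (h - 1) + 2) < b ∧ b < 1) :
    ∃! x : ℝ, x ∈ Set.Ioo (1 / 2 : ℝ) 1 ∧ g x b = φ * (h - 1) := by
  have hc : 0 < φ * (h - 1) := mul_pos hφ.1 (sub_pos.mpr hh)
  have hbc : 2 < b * (φ * (h - 1) + 2) := (div_lt_iff₀ (by positivity)).mp hb.1
  have hb0 : 0 < b := by nlinarith
  refine (existsUnique_congr fun x ↦ ?_).mpr (existsUnique_logResidual_eq_zero hc hb.2 hbc)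
  exact and_congr_right fun hx ↦ g_eq_iff_logResidual_eq_zero hb0 hc.le hx
end

section
/- The solution x̂(φ,h,b) is monotone increasing in each of its parameters: if φ1 ≤ φ2 in (0,1], h1 ≤ h2 with h1, h2 > 1, and b1 ≤ b2 in (0,1), with both triples satisfying 2/(φ_k·(h_k-1)+2) < b_k < 1 (k = 1,2), then x̂(φ1,h1,b1) ≤ x̂(φ2,h2,b2). -/
/-!
In terms of the odds `r = x/(1-x)` and of `c = 1-b`, `g(x,b) = (1+r)(r^c-1)/(r-r^c)`.
This is increasing in `c`, because `(u-1)/(r-u)` increases in `u < r`, and strictly increasing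
in `r > 1`: its derivative has the sign of `c·r^c(r²-1) - r(r^{2c}-1)`, which is positive by
the strict convexity of `sinh` on `[0,∞)`, in the form `sinh (c log r) < c sinh (log r)`.
So `g` increases in `x` and decreases in `b`, and the solution of `g(x,b) = φ(h-1)` can only
move right when `φ`, `h` or `b` grow.
-/

open Real Set

lemma Real.strictConvexOn_sinh : StrictConvexOn ℝ (Ici 0) sinh := by
  refine strictConvexOn_of_deriv2_pos (convex_Ici 0) continuous_sinh.continuousOn fun x hx => ?_
  rw [interior_Ici, mem_Ioi] at hx
  simpa only [Function.iterate_succ, Function.iterate_zero, Function.comp_apply, id_eq,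
    deriv_sinh, deriv_cosh] using sinh_pos_iff.mpr hx

lemma Real.sinh_mul_lt_mul_sinh {c s : ℝ} (hc0 : 0 < c) (hc1 : c < 1) (hs : 0 < s) :
    sinh (c * s) < c * sinh s := by
  simpa [sinh_zero] using strictConvexOn_sinh.2 (self_mem_Ici (a := (0 : ℝ))) (mem_Ici.2 hs.le)
    hs.ne (sub_pos.2 hc1) hc0 (sub_add_cancel 1 c)

lemma Real.rpow_sub_inv_lt {r c : ℝ} (hr : 1 < r) (hc0 : 0 < c) (hc1 : c < 1) :
    r ^ c - (r ^ c)⁻¹ < c * (r - r⁻¹) := by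
  have hr0 : 0 < r := one_pos.trans hr
  have h := sinh_mul_lt_mul_sinh hc0 hc1 (log_pos hr)
  have hu : exp (c * log r) = r ^ c := by rw [rpow_def_of_pos hr0, mul_comm]
  rw [sinh_eq, sinh_eq, exp_neg, exp_neg, exp_log hr0, hu] at h
  linarith

noncomputable def gOdds (r c : ℝ) : ℝ := (1 + r) * (r ^ c - 1) / (r - r ^ c)

lemma g_eq_gOdds {x : ℝ} (b : ℝ) (hx0 : 0 < x) (hx1 : x < 1) (hx : x ≠ 1 / 2) :
    g x b = gOdds (x / (1 - x)) (1 - b) := by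
  have hy : 0 < 1 - x := sub_pos.2 hx1
  have hxr : (1 - x) * (x / (1 - x)) = x := mul_div_cancel₀ x hy.ne'
  have hsplit : x ^ (1 - b) = (1 - x) ^ (1 - b) * (x / (1 - x)) ^ (1 - b) := by
    rw [← mul_rpow hy.le (div_nonneg hx0.le hy.le), hxr]
  have hY : (1 - x) ^ (1 - b) ≠ 0 := (rpow_pos_of_pos hy _).ne'
  rw [g, if_neg hx, gOdds, hsplit]
  generalize x / (1 - x) = r at *
  generalize (1 - x) ^ (1 - b) = Y at *
  have hinv : (1 - x)⁻¹ = 1 + r := inv_eq_of_mul_eq_one_right (by linear_combination hxr)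
  rw [show Y * r ^ (1 - b) - Y = Y * (r ^ (1 - b) - 1) by ring,
    show x * Y - (1 - x) * (Y * r ^ (1 - b)) = Y * ((1 - x) * (r - r ^ (1 - b))) by
      linear_combination (-Y) * hxr,
    mul_div_mul_left _ _ hY, ← div_div, div_eq_mul_inv _ (1 - x), hinv, mul_comm]

lemma hasDerivAt_gOdds {r c : ℝ} (hr : 1 < r) (hc : c < 1) :
    HasDerivAt (gOdds · c)
      ((c * r ^ c * (r ^ 2 - 1) - r * ((r ^ c) ^ 2 - 1)) / (r * (r - r ^ c) ^ 2)) r := by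
  have hr0 : 0 < r := one_pos.trans hr
  have hne : r - r ^ c ≠ 0 := (sub_pos.2 (rpow_lt_self_of_one_lt hr hc)).ne'
  have hpow : HasDerivAt (· ^ c) (c * r ^ (c - 1)) r := hasDerivAt_rpow_const (Or.inl hr0.ne')
  have hnum : HasDerivAt (fun y => (1 + y) * (y ^ c - 1))
      (1 * (r ^ c - 1) + (1 + r) * (c * r ^ (c - 1))) r :=
    ((hasDerivAt_id' r).const_add 1).mul (hpow.sub_const 1)
  have hden : HasDerivAt (fun y => y - y ^ c) (1 - c * r ^ (c - 1)) r := (hasDerivAt_id' r).sub hpow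
  refine (hnum.div hden hne).congr_deriv ?_
  rw [rpow_sub_one hr0.ne']
  field_simp
  ring

lemma gOdds_strictMonoOn {c : ℝ} (hc0 : 0 < c) (hc1 : c < 1) :
    StrictMonoOn (gOdds · c) (Ioi 1) := by
  refine strictMonoOn_of_deriv_pos (convex_Ioi 1)
    (fun r hr => (hasDerivAt_gOdds hr hc1).continuousAt.continuousWithinAt) fun r hr => ?_
  rw [interior_Ioi, mem_Ioi] at hr
  have hr0 : 0 < r := one_pos.trans hr
  have hu0 : 0 < r ^ c := rpow_pos_of_pos hr0 c
  have hne : r - r ^ c ≠ 0 := (sub_pos.2 (rpow_lt_self_of_one_lt hr hc1)).ne'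
  have key := mul_lt_mul_of_pos_left (rpow_sub_inv_lt hr hc0 hc1) (mul_pos hr0 hu0)
  field_simp at key
  rw [(hasDerivAt_gOdds hr hc1).deriv]
  exact div_pos (by linarith) (by positivity)

lemma gOdds_le_gOdds_of_le {r c c' : ℝ} (hr : 1 < r) (hcc' : c ≤ c') (hc' : c' < 1) :
    gOdds r c ≤ gOdds r c' := by
  have hu : r ^ c ≤ r ^ c' := rpow_le_rpow_of_exponent_le hr.le hcc'
  have hv : r ^ c' < r := rpow_lt_self_of_one_lt hr hc'
  rw [gOdds, gOdds, div_le_div_iff₀ (by linarith) (by linarith)]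
  nlinarith [mul_nonneg (mul_nonneg (by linarith : (0 : ℝ) ≤ 1 + r) (sub_nonneg.2 hr.le))
    (sub_nonneg.2 hu)]

lemma one_lt_odds {x : ℝ} (hx : x ∈ Ioo (1 / 2) 1) : 1 < x / (1 - x) :=
  (one_lt_div (sub_pos.2 hx.2)).2 (by linarith [hx.1])

lemma g_strictMonoOn {b : ℝ} (hb0 : 0 < b) (hb1 : b < 1) :
    StrictMonoOn (g · b) (Ioo (1 / 2) 1) := by
  intro x hx y hy hxy
  dsimp only
  rw [g_eq_gOdds b (by linarith [hx.1]) hx.2 hx.1.ne',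
    g_eq_gOdds b (by linarith [hy.1]) hy.2 hy.1.ne']
  refine gOdds_strictMonoOn (sub_pos.2 hb1) (sub_lt_self 1 hb0) (one_lt_odds hx) (one_lt_odds hy) ?_
  rw [div_lt_div_iff₀ (sub_pos.2 hx.2) (sub_pos.2 hy.2)]
  nlinarith

lemma g_le_g_of_le_right {x b b' : ℝ} (hx : x ∈ Ioo (1 / 2) 1) (hb : 0 < b) (hbb' : b ≤ b') :
    g x b' ≤ g x b := by
  rw [g_eq_gOdds b (by linarith [hx.1]) hx.2 hx.1.ne',
    g_eq_gOdds b' (by linarith [hx.1]) hx.2 hx.1.ne']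
  exact gOdds_le_gOdds_of_le (one_lt_odds hx) (by linarith) (sub_lt_self 1 hb)

theorem stmt_8_general (φ1 h1 b1 φ2 h2 b2 xhat1 xhat2 : ℝ)
    (hφ1 : 0 < φ1 ∧ φ1 ≤ 1) (hh1 : 1 < h1)
    (hb1 : 2 / (φ1 * (h1 - 1) + 2) < b1 ∧ b1 < 1)
    (hxhat1 : xhat1 ∈ Set.Ioo (1 / 2 : ℝ) 1 ∧ g xhat1 b1 = φ1 * (h1 - 1))
    (hxhat2 : xhat2 ∈ Set.Ioo (1 / 2 : ℝ) 1 ∧ g xhat2 b2 = φ2 * (h2 - 1))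
    (hφ : φ1 ≤ φ2) (hhle : h1 ≤ h2) (hble : b1 ≤ b2) :
    xhat1 ≤ xhat2 := by
  obtain ⟨hx1, hg1⟩ := hxhat1
  obtain ⟨hx2, hg2⟩ := hxhat2
  have hb1_pos : 0 < b1 := by
    have : 0 < φ1 * (h1 - 1) := mul_pos hφ1.1 (sub_pos.2 hh1)
    exact (div_pos two_pos (by linarith)).trans hb1.1
  refine ((g_strictMonoOn hb1_pos hb1.2).le_iff_le hx1 hx2).1 ?_
  calc g xhat1 b1 = φ1 * (h1 - 1) := hg1
    _ ≤ φ2 * (h2 - 1) := mul_le_mul hφ (by linarith) (by linarith) (by linarith)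
    _ = g xhat2 b2 := hg2.symm
    _ ≤ g xhat2 b1 := g_le_g_of_le_right hx2 hb1_pos hble

/-- Lemma 2(iii), monotonicity part: the solution `x̂(φ,h,b)` of
`g(x,b) = φ(h-1)` in `(1/2,1)` is monotone increasing in each of `φ`, `h`, `b`
(for parameter triples in the moderate-bias range). -/
theorem stmt_8 (φ1 h1 b1 φ2 h2 b2 xhat1 xhat2 : ℝ)
    (hφ1 : 0 < φ1 ∧ φ1 ≤ 1) (hh1 : 1 < h1)
    (hb1 : 2 / (φ1 * (h1 - 1) + 2) < b1 ∧ b1 < 1)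
    (hφ2 : 0 < φ2 ∧ φ2 ≤ 1) (hh2 : 1 < h2)
    (hb2 : 2 / (φ2 * (h2 - 1) + 2) < b2 ∧ b2 < 1)
    (hxhat1 : xhat1 ∈ Set.Ioo (1 / 2 : ℝ) 1 ∧ g xhat1 b1 = φ1 * (h1 - 1))
    (hxhat2 : xhat2 ∈ Set.Ioo (1 / 2 : ℝ) 1 ∧ g xhat2 b2 = φ2 * (h2 - 1))
    (hφ : φ1 ≤ φ2) (hhle : h1 ≤ h2) (hble : b1 ≤ b2) :
    xhat1 ≤ xhat2 :=
  stmt_8_general φ1 h1 b1 φ2 h2 b2 xhat1 xhat2 hφ1 hh1 hb1 hxhat1 hxhat2 hφ hhle hble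
end

section
/- Fix b ∈ (0,1), φ ∈ (0,1), h > 1, and consider pairs (x,y) with 1/2 ≤ y ≤ x ≤ 1 satisfying the fixed-point equations x = x^b·A(y) / (x^b·A(y) + (1-x)^b·B(y)) and y = φ·x + (1-φ)·A(y)/(h+1), where A(y) = h·y + 1 - y and B(y) = y + h·(1-y). If 0 < b ≤ 2/(φ·(h-1)+2), the set of solutions is exactly {(1/2, 1/2), (1, (φ·h+1)/(φ·h+2-φ))}; if 2/(φ·(h-1)+2) < b < 1, the set of solutions is exactly {(1/2, 1/2), (1, (φ·h+1)/(φ·h+2-φ)), (x̂(φ,h,b), (φ·(h+1)·x̂(φ,h,b) + 1 - φ)/(φ·h + 2 - φ))}. -/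
open Filter Topology

/-!
The second equation is linear in `y`: it says `y = yOf φ h x`. Substituting, `A h y` and `B h y`
become proportional to `1 + c x` and `1 + c (1 - x)`, where `c = φ (h - 1)`, so for `x < 1` the
first equation reads `(1 + c x) (1 - x)^(1-b) = (1 + c (1 - x)) x^(1-b)`, i.e. `psi b c x = 0`,
`psi` being the logarithm of the ratio of the two sides. Also `g x b = c` is this same equation.

Now `psi b c (1/2) = 0`, and `z (1 - z) (1 + c z) (1 + c (1 - z)) psi'(z)` equals
`(1 - b) (1 + c) - z (1 - z) c (2 + b c)`, which is increasing on `(1/2, 1)`, positive there when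
`b ≤ 2 / (c + 2)`, and has at most one zero there in any case. By Rolle's theorem `psi` then has
no root in `(1/2, 1)` in the first case and at most one, namely `x̂`, in the second.
-/

open Set

noncomputable def psi (b c z : ℝ) : ℝ :=
  (1 - b) * (Real.log z - Real.log (1 - z)) - Real.log (1 + c * z) + Real.log (1 + c * (1 - z))

noncomputable def psiDeriv (b c z : ℝ) : ℝ :=
  (1 - b) * (1 / z + 1 / (1 - z)) - c / (1 + c * z) - c / (1 + c * (1 - z))

section psi

variable {b c : ℝ}

theorem psi_half : psi b c (1 / 2) = 0 := by
  norm_num [psi]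

theorem hasDerivAt_psi {z : ℝ} (hc : 0 ≤ c) (hz0 : 0 < z) (hz1 : z < 1) :
    HasDerivAt (psi b c) (psiDeriv b c z) z := by
  have hz : HasDerivAt (fun z : ℝ => z) 1 z := hasDerivAt_id z
  have hlog := hz.log hz0.ne'
  have hlog' := (hz.const_sub 1).log (sub_ne_zero.2 hz1.ne')
  have hlogc := ((hz.const_mul c).const_add 1).log (by positivity : (1 + c * z) ≠ 0)
  have hlogc' := (((hz.const_sub 1).const_mul c).const_add 1).log
    (by nlinarith : (1 + c * (1 - z)) ≠ 0)
  refine ((((hlog.sub hlog').const_mul (1 - b)).sub hlogc).add hlogc').congr_deriv ?_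
  simp only [psiDeriv]
  ring

theorem psiDeriv_mul_eq {z : ℝ} (hc : 0 ≤ c) (hz0 : 0 < z) (hz1 : z < 1) :
    psiDeriv b c z * (z * (1 - z) * (1 + c * z) * (1 + c * (1 - z))) =
      (1 - b) * (1 + c) - z * (1 - z) * (c * (2 + b * c)) := by
  have hu : 1 / z * z = 1 := one_div_mul_cancel hz0.ne'
  have hv : 1 / (1 - z) * (1 - z) = 1 := one_div_mul_cancel (sub_ne_zero.2 hz1.ne')
  have hp : c / (1 + c * z) * (1 + c * z) = c := div_mul_cancel₀ c (by positivity)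
  have hq : c / (1 + c * (1 - z)) * (1 + c * (1 - z)) = c := div_mul_cancel₀ c (by nlinarith)
  simp only [psiDeriv]
  linear_combination (1 - b) * (1 - z) * (1 + c * z) * (1 + c * (1 - z)) * hu
    + (1 - b) * z * (1 + c * z) * (1 + c * (1 - z)) * hv
    - z * (1 - z) * (1 + c * (1 - z)) * hp - z * (1 - z) * (1 + c * z) * hq

theorem psiDeriv_pos {z : ℝ} (hb : 0 ≤ b) (hc : 0 < c) (hbc : b ≤ 2 / (c + 2))
    (hz0 : 1 / 2 < z) (hz1 : z < 1) : 0 < psiDeriv b c z := by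
  have hbc' : b * (c + 2) ≤ 2 := (le_div_iff₀ (by linarith)).1 hbc
  have hD : 0 < z * (1 - z) * (1 + c * z) * (1 + c * (1 - z)) := by
    have : 0 < 1 - z := by linarith
    have : 0 < 1 + c * (1 - z) := by positivity
    positivity
  -- the right side of `psiDeriv_mul_eq` exceeds `(2 + c) * (2 - b * (2 + c)) / 4 ≥ 0`
  have hN : 0 < (1 - b) * (1 + c) - z * (1 - z) * (c * (2 + b * c)) := by
    nlinarith [mul_pos (show 0 < 1 / 4 - z * (1 - z) by nlinarith)
      (show 0 < c * (2 + b * c) by positivity)]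
  rw [← psiDeriv_mul_eq hc.le (by linarith) hz1] at hN
  exact pos_of_mul_pos_left hN hD.le

theorem eq_of_psiDeriv_eq_zero {z₁ z₂ : ℝ} (hb : 0 ≤ b) (hc : 0 < c)
    (hz₁ : z₁ ∈ Ioo (1 / 2) 1) (hz₂ : z₂ ∈ Ioo (1 / 2) 1)
    (h₁ : psiDeriv b c z₁ = 0) (h₂ : psiDeriv b c z₂ = 0) : z₁ = z₂ := by
  have e₁ := psiDeriv_mul_eq (b := b) hc.le (by linarith [hz₁.1]) hz₁.2
  have e₂ := psiDeriv_mul_eq (b := b) hc.le (by linarith [hz₂.1]) hz₂.2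
  rw [h₁, zero_mul] at e₁
  rw [h₂, zero_mul] at e₂
  have hk : 0 < c * (2 + b * c) := by positivity
  have : (z₁ - z₂) * (1 - z₁ - z₂) = 0 := by
    apply mul_right_cancel₀ hk.ne'
    linear_combination e₁ - e₂
  rcases mul_eq_zero.1 this with h | h <;> linarith [hz₁.1, hz₂.1]

theorem exists_psiDeriv_eq_zero {a x : ℝ} (hc : 0 ≤ c) (ha : 0 < a) (hax : a < x) (hx : x < 1)
    (h : psi b c a = psi b c x) : ∃ z ∈ Ioo a x, psiDeriv b c z = 0 := by
  have hderiv : ∀ z ∈ Icc a x, HasDerivAt (psi b c) (psiDeriv b c z) z := fun z hz =>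
    hasDerivAt_psi hc (ha.trans_le hz.1) (hz.2.trans_lt hx)
  exact exists_hasDerivAt_eq_zero hax
    (fun z hz => (hderiv z hz).continuousAt.continuousWithinAt) h
    (fun z hz => hderiv z (Ioo_subset_Icc_self hz))

theorem psi_ne_zero {x : ℝ} (hb : 0 ≤ b) (hc : 0 < c) (hbc : b ≤ 2 / (c + 2))
    (hx : x ∈ Ioo (1 / 2) 1) : psi b c x ≠ 0 := by
  intro hψ
  obtain ⟨z, hz, hz0⟩ :=
    exists_psiDeriv_eq_zero hc.le one_half_pos hx.1 hx.2 (by rw [psi_half, hψ])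
  exact (psiDeriv_pos hb hc hbc hz.1 (hz.2.trans hx.2)).ne' hz0

-- Two roots beyond `1/2`, together with the root `1/2`, would give two critical points.
theorem eq_of_psi_eq_zero {x₁ x₂ : ℝ} (hb : 0 ≤ b) (hc : 0 < c)
    (hx₁ : x₁ ∈ Ioo (1 / 2) 1) (hx₂ : x₂ ∈ Ioo (1 / 2) 1)
    (h₁ : psi b c x₁ = 0) (h₂ : psi b c x₂ = 0) : x₁ = x₂ := by
  wlog hlt : x₁ < x₂ generalizing x₁ x₂
  · rcases (not_lt.1 hlt).eq_or_lt with h | h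
    · exact h.symm
    · exact (this hx₂ hx₁ h₂ h₁ h).symm
  obtain ⟨z₁, hz₁, hz₁0⟩ :=
    exists_psiDeriv_eq_zero hc.le one_half_pos hx₁.1 hx₁.2 (by rw [psi_half, h₁])
  obtain ⟨z₂, hz₂, hz₂0⟩ :=
    exists_psiDeriv_eq_zero hc.le (by linarith [hx₁.1]) hlt hx₂.2 (by rw [h₁, h₂])
  have := eq_of_psiDeriv_eq_zero hb hc ⟨hz₁.1, hz₁.2.trans hx₁.2⟩
    ⟨hx₁.1.trans hz₂.1, hz₂.2.trans hx₂.2⟩ hz₁0 hz₂0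
  linarith [hz₁.2, hz₂.1]

theorem psi_eq_zero_iff {x : ℝ} (hc : 0 ≤ c) (hx0 : 0 < x) (hx1 : x < 1) :
    psi b c x = 0 ↔ (1 + c * x) * (1 - x) ^ (1 - b) = (1 + c * (1 - x)) * x ^ (1 - b) := by
  have h1x : 0 < 1 - x := by linarith
  have hl : 0 < (1 + c * x) * (1 - x) ^ (1 - b) := by positivity
  have hr : 0 < (1 + c * (1 - x)) * x ^ (1 - b) := by positivity
  rw [← Real.log_injOn_pos.eq_iff hl hr, Real.log_mul (by positivity) (by positivity),
    Real.log_mul (by positivity) (by positivity), Real.log_rpow hx0, Real.log_rpow h1x, psi]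
  constructor <;> intro h <;> linarith

-- A vanishing denominator would force `g x b = 0 ≠ c`.
theorem psi_eq_zero_of_g_eq {x : ℝ} (hc : 0 < c) (hx : x ∈ Ioo (1 / 2) 1) (hg : g x b = c) :
    psi b c x = 0 := by
  rw [g, if_neg hx.1.ne'] at hg
  have hden : x * (1 - x) ^ (1 - b) - (1 - x) * x ^ (1 - b) ≠ 0 := by
    intro h0
    rw [h0, div_zero] at hg
    exact hc.ne hg
  rw [div_eq_iff hden] at hg
  rw [psi_eq_zero_iff hc.le (by linarith [hx.1]) hx.2]
  linear_combination -hg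

end psi

theorem eq_rpow_div_iff {x b α β : ℝ} (hx0 : 0 < x) (hx1 : x < 1) (hα : 0 < α) (hβ : 0 < β) :
    x = x ^ b * α / (x ^ b * α + (1 - x) ^ b * β) ↔
      α * (1 - x) ^ (1 - b) = β * x ^ (1 - b) := by
  have h1x : 0 < 1 - x := by linarith
  have hx : x ^ (1 - b) * x ^ b = x := by rw [← Real.rpow_add hx0]; norm_num
  have h1x' : (1 - x) ^ (1 - b) * (1 - x) ^ b = 1 - x := by rw [← Real.rpow_add h1x]; norm_num
  have hk : 0 < x ^ b * (1 - x) ^ b := by positivity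
  rw [eq_div_iff (by positivity)]
  refine Iff.trans ?_ (mul_right_inj' hk.ne')
  constructor <;> intro e <;>
    linear_combination (x ^ b * α) * h1x' - ((1 - x) ^ b * β) * hx - e

noncomputable def yOf (φ h x : ℝ) : ℝ := (φ * (h + 1) * x + 1 - φ) / (φ * h + 2 - φ)

section fixedPoint

variable {h φ : ℝ}

theorem yOf_half (hd : φ * h + 2 - φ ≠ 0) : yOf φ h (1 / 2) = 1 / 2 := by
  rw [yOf, div_eq_iff hd]
  ring

theorem yOf_one : yOf φ h 1 = (φ * h + 1) / (φ * h + 2 - φ) := by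
  rw [yOf]
  ring_nf

theorem eq_add_A_div_iff {x y : ℝ} (hh : h + 1 ≠ 0) (hd : φ * h + 2 - φ ≠ 0) :
    y = φ * x + (1 - φ) * (A h y / (h + 1)) ↔ y = yOf φ h x := by
  rw [yOf, eq_div_iff hd, A]
  constructor <;> intro e
  · field_simp at e
    linear_combination e
  · field_simp
    linear_combination e

theorem A_yOf (x : ℝ) (hd : φ * h + 2 - φ ≠ 0) :
    A h (yOf φ h x) = (h + 1) / (φ * h + 2 - φ) * (1 + φ * (h - 1) * x) := by
  rw [A, yOf]
  linear_combination -mul_inv_cancel₀ hd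

theorem B_yOf (x : ℝ) (hd : φ * h + 2 - φ ≠ 0) :
    B h (yOf φ h x) = (h + 1) / (φ * h + 2 - φ) * (1 + φ * (h - 1) * (1 - x)) := by
  rw [B, yOf]
  linear_combination -h * mul_inv_cancel₀ hd

theorem fixedPoint_iff {b x y : ℝ} (hh : 1 < h) (hφ : 0 ≤ φ) (hb : 0 < b)
    (hy0 : 0 ≤ y) (hy1 : y ≤ 1) (hx0 : 0 < x) (hx1 : x ≤ 1) :
    (x = x ^ b * A h y / (x ^ b * A h y + (1 - x) ^ b * B h y) ∧
        y = φ * x + (1 - φ) * (A h y / (h + 1))) ↔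
      y = yOf φ h x ∧ (x = 1 ∨ x < 1 ∧ psi b (φ * (h - 1)) x = 0) := by
  have hd : 0 < φ * h + 2 - φ := by nlinarith
  have hA : 0 < A h y := by rw [A]; nlinarith
  have hB : 0 < B h y := by rw [B]; nlinarith
  rw [and_comm, eq_add_A_div_iff (by linarith) hd.ne', and_congr_right_iff]
  rintro rfl
  rcases hx1.eq_or_lt with rfl | hx1
  · simp [Real.zero_rpow hb.ne', hA.ne']
  · set k := (h + 1) / (φ * h + 2 - φ)
    have hk : 0 < k := by positivity
    rw [eq_rpow_div_iff hx0 hx1 hA hB, A_yOf _ hd.ne', B_yOf _ hd.ne', mul_assoc k, mul_assoc k,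
      mul_right_inj' hk.ne', psi_eq_zero_iff (by nlinarith) hx0 hx1]
    simp only [hx1.ne, hx1, false_or, true_and]

theorem fixedPoint_iff_of_half_le {b x y : ℝ} (hh : 1 < h) (hφ : 0 ≤ φ) (hb : 0 < b)
    (hy : 1 / 2 ≤ y) (hyx : y ≤ x) (hx1 : x ≤ 1) :
    (x = x ^ b * A h y / (x ^ b * A h y + (1 - x) ^ b * B h y) ∧
        y = φ * x + (1 - φ) * (A h y / (h + 1))) ↔
      y = yOf φ h x ∧ (x = 1 / 2 ∨ x = 1 ∨ x ∈ Ioo (1 / 2) 1 ∧ psi b (φ * (h - 1)) x = 0) := by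
  rw [fixedPoint_iff hh hφ hb (by linarith) (hyx.trans hx1) (by linarith) hx1,
    and_congr_right_iff]
  rintro -
  rcases (hy.trans hyx).eq_or_lt with rfl | hx
  · norm_num [psi_half]
  · simp only [hx.ne', false_or, mem_Ioo, hx, true_and]

end fixedPoint

/-- Lemma 3 of the paper: for `b ∈ (0,1)`, `φ ∈ (0,1)`, `h > 1`, the solutions
`(x,y)` with `1/2 ≤ y ≤ x ≤ 1` of the fixed-point equations of the scalar
dual-opinion system are exactly `(1/2,1/2)` and `(1,(φh+1)/(φh+2-φ))` when
`0 < b ≤ 2/(φ(h-1)+2)`, together additionally with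
`(x̂(φ,h,b), (φ(h+1)x̂+1-φ)/(φh+2-φ))` when `2/(φ(h-1)+2) < b < 1`. -/
theorem stmt_9 (h φ b xhat : ℝ)
    (hh : 1 < h) (hφ : 0 < φ ∧ φ < 1) (hb : 0 < b ∧ b < 1)
    (hxhat : 2 / (φ * (h - 1) + 2) < b →
      xhat ∈ Set.Ioo (1 / 2 : ℝ) 1 ∧ g xhat b = φ * (h - 1)) :
    (b ≤ 2 / (φ * (h - 1) + 2) →
      ∀ x y : ℝ, 1 / 2 ≤ y → y ≤ x → x ≤ 1 →
        ((x = x ^ b * A h y / (x ^ b * A h y + (1 - x) ^ b * B h y) ∧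
          y = φ * x + (1 - φ) * (A h y / (h + 1))) ↔
          ((x, y) = ((1 / 2 : ℝ), (1 / 2 : ℝ)) ∨
           (x, y) = ((1 : ℝ), (φ * h + 1) / (φ * h + 2 - φ))))) ∧
    (2 / (φ * (h - 1) + 2) < b →
      ∀ x y : ℝ, 1 / 2 ≤ y → y ≤ x → x ≤ 1 →
        ((x = x ^ b * A h y / (x ^ b * A h y + (1 - x) ^ b * B h y) ∧
          y = φ * x + (1 - φ) * (A h y / (h + 1))) ↔
          ((x, y) = ((1 / 2 : ℝ), (1 / 2 : ℝ)) ∨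
           (x, y) = ((1 : ℝ), (φ * h + 1) / (φ * h + 2 - φ)) ∨
           (x, y) = (xhat, (φ * (h + 1) * xhat + 1 - φ) / (φ * h + 2 - φ))))) := by
  obtain ⟨hφ0, -⟩ := hφ
  obtain ⟨hb0, -⟩ := hb
  have hc : 0 < φ * (h - 1) := mul_pos hφ0 (by linarith)
  have hd : φ * h + 2 - φ ≠ 0 := by nlinarith
  refine ⟨fun hbc x y hy hyx hx1 => ?_, fun hbc x y hy hyx hx1 => ?_⟩
  · have hroots (x : ℝ) : ¬(x ∈ Ioo (1 / 2) 1 ∧ psi b (φ * (h - 1)) x = 0) :=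
      fun ⟨hx, hψ⟩ => psi_ne_zero hb0.le hc hbc hx hψ
    rw [fixedPoint_iff_of_half_le hh hφ0.le hb0 hy hyx hx1]
    simp only [hroots, or_false, Prod.mk.injEq]
    constructor
    · rintro ⟨rfl, rfl | rfl⟩
      exacts [Or.inl ⟨rfl, yOf_half hd⟩, Or.inr ⟨rfl, yOf_one⟩]
    · rintro (⟨rfl, rfl⟩ | ⟨rfl, rfl⟩)
      exacts [⟨(yOf_half hd).symm, Or.inl rfl⟩, ⟨yOf_one.symm, Or.inr rfl⟩]
  · obtain ⟨hxhat, hg⟩ := hxhat hbc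
    have hψ := psi_eq_zero_of_g_eq hc hxhat hg
    have hroots (x : ℝ) : x ∈ Ioo (1 / 2) 1 ∧ psi b (φ * (h - 1)) x = 0 ↔ x = xhat :=
      ⟨fun ⟨hx, hψx⟩ => eq_of_psi_eq_zero hb0.le hc hx hxhat hψx hψ,
        by rintro rfl; exact ⟨hxhat, hψ⟩⟩
    rw [fixedPoint_iff_of_half_le hh hφ0.le hb0 hy hyx hx1, hroots]
    simp only [Prod.mk.injEq]
    constructor
    · rintro ⟨rfl, rfl | rfl | rfl⟩
      exacts [Or.inl ⟨rfl, yOf_half hd⟩, Or.inr (Or.inl ⟨rfl, yOf_one⟩), Or.inr (Or.inr ⟨rfl, rfl⟩)]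
    · rintro (⟨rfl, rfl⟩ | ⟨rfl, rfl⟩ | ⟨rfl, rfl⟩)
      exacts [⟨(yOf_half hd).symm, Or.inl rfl⟩, ⟨yOf_one.symm, Or.inr (Or.inl rfl)⟩,
        ⟨rfl, Or.inr (Or.inr rfl)⟩]
end

section
/- In the dual-opinion scalar system, suppose there exists k_x ≥ 0 such that x is monotone on {t : t > k_x} (i.e., either x(t+1) ≥ x(t) for all t > k_x, or x(t+1) ≤ x(t) for all t > k_x). Then there exists k > k_x such that y is monotone on {t : t > k}, and both sequences x(t) and y(t) converge to finite limits as t → ∞. -/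
open Filter Topology

/-- An eventually monotone sequence bounded in `[0,1]` converges. -/
lemma aux_conv (f : ℕ → ℝ) (k : ℕ) (h0 : ∀ t, 0 ≤ f t) (h1 : ∀ t, f t ≤ 1)
    (hm : (∀ t, k < t → f t ≤ f (t + 1)) ∨ (∀ t, k < t → f (t + 1) ≤ f t)) :
    ∃ L, Filter.Tendsto f Filter.atTop (nhds L) := by
  rcases hm with hm | hm
  · set g : ℕ → ℝ := fun n => f (n + (k + 1)) with hg
    have hmono : Monotone g := by
      apply monotone_nat_of_le_succ
      intro n
      have h2 : n + 1 + (k + 1) = (n + (k + 1)) + 1 := by omega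
      simp only [hg, h2]
      exact hm _ (by omega)
    have hbdd : BddAbove (Set.range g) := ⟨1, by rintro z ⟨n, rfl⟩; exact h1 _⟩
    refine ⟨⨆ n, g n, ?_⟩
    rw [← Filter.tendsto_add_atTop_iff_nat (k + 1)]
    exact tendsto_atTop_ciSup hmono hbdd
  · set g : ℕ → ℝ := fun n => f (n + (k + 1)) with hg
    have hanti : Antitone g := by
      apply antitone_nat_of_succ_le
      intro n
      have h2 : n + 1 + (k + 1) = (n + (k + 1)) + 1 := by omega
      simp only [hg, h2]
      exact hm _ (by omega)
    have hbdd : BddBelow (Set.range g) := ⟨0, by rintro z ⟨n, rfl⟩; exact h0 _⟩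
    refine ⟨⨅ n, g n, ?_⟩
    rw [← Filter.tendsto_add_atTop_iff_nat (k + 1)]
    exact tendsto_atTop_ciInf hanti hbdd

/-- Lemma 4 of the paper: if the implicit opinion `x` is eventually monotone
(after some time `k_x`), then the explicit opinion `y` is eventually monotone
as well, and both sequences converge. -/
theorem stmt_10 (h φ b : ℝ) (x y : ℕ → ℝ)
    (hh : 1 < h) (hφ : 0 < φ ∧ φ < 1)
    (hx0 : 1 / 2 < x 0 ∧ x 0 < 1) (hy0 : 1 / 2 ≤ y 0 ∧ y 0 ≤ x 0)
    (hxupd : ∀ t : ℕ, x (t + 1) =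
      (x t) ^ b * A h (y t) / ((x t) ^ b * A h (y t) + (1 - x t) ^ b * B h (y t)))
    (hyupd : ∀ t : ℕ, y (t + 1) = φ * x (t + 1) + (1 - φ) * (A h (y t) / (h + 1)))
    (hb : 0 < b)
    (kx : ℕ)
    (hmono : (∀ t : ℕ, kx < t → x t ≤ x (t + 1)) ∨
             (∀ t : ℕ, kx < t → x (t + 1) ≤ x t)) :
    (∃ k : ℕ, kx < k ∧
      ((∀ t : ℕ, k < t → y t ≤ y (t + 1)) ∨ (∀ t : ℕ, k < t → y (t + 1) ≤ y t))) ∧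
    (∃ Lx : ℝ, Filter.Tendsto x Filter.atTop (nhds Lx)) ∧
    (∃ Ly : ℝ, Filter.Tendsto y Filter.atTop (nhds Ly)) := by
  obtain ⟨hφ1, hφ2⟩ := hφ
  have bnd : ∀ t, 0 < x t ∧ x t < 1 ∧ 0 ≤ y t ∧ y t ≤ 1 := by
    intro t
    induction t with
    | zero =>
      exact ⟨by linarith [hx0.1], hx0.2, by linarith [hy0.1], by linarith [hy0.2, hx0.2]⟩
    | succ t ih =>
      obtain ⟨hx1, hx2, hy1, hy2⟩ := ih
      have hA : 1 ≤ A h (y t) := by unfold A; nlinarith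
      have hB : 1 ≤ B h (y t) := by unfold B; nlinarith
      have hp : 0 < x t ^ b * A h (y t) :=
        mul_pos (Real.rpow_pos_of_pos hx1 b) (by linarith)
      have hq : 0 < (1 - x t) ^ b * B h (y t) :=
        mul_pos (Real.rpow_pos_of_pos (by linarith) b) (by linarith)
      have hx'1 : 0 < x (t + 1) := by
        rw [hxupd t]; exact div_pos hp (by linarith)
      have hx'2 : x (t + 1) < 1 := by
        rw [hxupd t, div_lt_one (by linarith)]; linarith
      have hAle : A h (y t) ≤ h := by unfold A; nlinarith
      have hgle : A h (y t) / (h + 1) ≤ 1 := by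
        rw [div_le_one (by linarith)]; linarith
      have hg0 : 0 ≤ A h (y t) / (h + 1) := div_nonneg (by linarith) (by linarith)
      refine ⟨hx'1, hx'2, ?_, ?_⟩
      · rw [hyupd t]; nlinarith
      · rw [hyupd t]; nlinarith
  have hd : ∀ t, y (t + 2) - y (t + 1) =
      φ * (x (t + 2) - x (t + 1)) + ((1 - φ) * (h - 1) / (h + 1)) * (y (t + 1) - y t) := by
    intro t
    rw [hyupd (t + 1), hyupd t]
    unfold A
    have hne : h + 1 ≠ 0 := by linarith
    field_simp
    ring
  have hc : 0 ≤ (1 - φ) * (h - 1) / (h + 1) :=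
    div_nonneg (mul_nonneg (by linarith) (by linarith)) (by linarith)
  have hmainy : ∃ k : ℕ, kx < k ∧
      ((∀ t : ℕ, k < t → y t ≤ y (t + 1)) ∨ (∀ t : ℕ, k < t → y (t + 1) ≤ y t)) := by
    rcases hmono with hinc | hdec
    · by_cases hex : ∃ t0, kx + 1 < t0 ∧ y t0 ≤ y (t0 + 1)
      · obtain ⟨t0, ht0, hbase⟩ := hex
        have hstep : ∀ t, t0 ≤ t → y t ≤ y (t + 1) := by
          intro t ht
          induction t, ht using Nat.le_induction with
          | base => exact hbase
          | succ t ht ih =>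
            have hx : x (t + 1) ≤ x (t + 1 + 1) := hinc (t + 1) (by omega)
            nlinarith [hd t]
        exact ⟨t0, by omega, Or.inl fun t ht => hstep t (le_of_lt ht)⟩
      · push_neg at hex
        exact ⟨kx + 1, by omega, Or.inr fun t ht => le_of_lt (hex t ht)⟩
    · by_cases hex : ∃ t0, kx + 1 < t0 ∧ y (t0 + 1) ≤ y t0
      · obtain ⟨t0, ht0, hbase⟩ := hex
        have hstep : ∀ t, t0 ≤ t → y (t + 1) ≤ y t := by
          intro t ht
          induction t, ht using Nat.le_induction with
          | base => exact hbase
          | succ t ht ih =>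
            have hx : x (t + 1 + 1) ≤ x (t + 1) := hdec (t + 1) (by omega)
            nlinarith [hd t]
        exact ⟨t0, by omega, Or.inr fun t ht => hstep t (le_of_lt ht)⟩
      · push_neg at hex
        exact ⟨kx + 1, by omega, Or.inl fun t ht => le_of_lt (hex t ht)⟩
  refine ⟨hmainy, ?_, ?_⟩
  · exact aux_conv x kx (fun t => (bnd t).1.le) (fun t => (bnd t).2.1.le) hmono
  · obtain ⟨k, _, hk⟩ := hmainy
    exact aux_conv y k (fun t => (bnd t).2.2.1) (fun t => (bnd t).2.2.2) hk
end

section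
/- In the dual-opinion scalar system with 2/(φ·(h-1)+2) < b < 1, if x(k) < x̂(1,h,b) for some time k ≥ 0, then x(t) < x̂(1,h,b) for all t ≥ k. -/
open Filter Topology

set_option maxHeartbeats 1000000 in
/-- Claim 1 in the proof of Theorem 3: in the moderate-bias regime, if
`x(k) < x̂(1,h,b)` for some time `k`, then `x(t) < x̂(1,h,b)` for all `t ≥ k`. -/
theorem stmt_13 (h φ b : ℝ) (x y : ℕ → ℝ) (xhat1 : ℝ)
    (hh : 1 < h) (hφ : 0 < φ ∧ φ < 1)
    (hx0 : 1 / 2 < x 0 ∧ x 0 < 1) (hy0 : 1 / 2 ≤ y 0 ∧ y 0 ≤ x 0)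
    (hxupd : ∀ t : ℕ, x (t + 1) =
      (x t) ^ b * A h (y t) / ((x t) ^ b * A h (y t) + (1 - x t) ^ b * B h (y t)))
    (hyupd : ∀ t : ℕ, y (t + 1) = φ * x (t + 1) + (1 - φ) * (A h (y t) / (h + 1)))
    (hb : 2 / (φ * (h - 1) + 2) < b ∧ b < 1)
    (hxhat1 : xhat1 ∈ Set.Ioo (1 / 2 : ℝ) 1 ∧ g xhat1 b = h - 1)
    (k : ℕ) (hk : x k < xhat1) :
    ∀ t : ℕ, k ≤ t → x t < xhat1 := by
  obtain ⟨hφ0, hφ1⟩ := hφ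
  obtain ⟨hb1, hb2⟩ := hb
  obtain ⟨⟨hxhl, hxhr⟩, hgxh⟩ := hxhat1
  have hbpos : 0 < b := by
    have h2 : 0 < 2 / (φ * (h - 1) + 2) := by
      apply div_pos two_pos
      nlinarith
    linarith
  -- basic invariant: 1/2 < x t < 1 and 1/2 ≤ y t ≤ x t
  have inv : ∀ t : ℕ, (1 / 2 < x t ∧ x t < 1) ∧ (1 / 2 ≤ y t ∧ y t ≤ x t) := by
    intro t
    induction t with
    | zero => exact ⟨hx0, hy0⟩
    | succ n ih =>
      obtain ⟨⟨hxl, hxr⟩, hyl, hyr⟩ := ih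
      have hApos : 0 < A h (y n) := by
        simp only [A]
        nlinarith [mul_pos (by linarith : (0:ℝ) < h - 1) (by linarith : (0:ℝ) < y n)]
      have hBpos : 0 < B h (y n) := by
        simp only [B]
        nlinarith [mul_nonneg (by linarith : (0:ℝ) ≤ h) (by linarith : (0:ℝ) ≤ 1 - y n)]
      have hAB : B h (y n) ≤ A h (y n) := by
        simp only [A, B]
        nlinarith [mul_nonneg (by linarith : (0:ℝ) ≤ h - 1) (by linarith : (0:ℝ) ≤ 2 * y n - 1)]
      have hpa : 0 < (x n) ^ b := Real.rpow_pos_of_pos (by linarith) b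
      have hp1a : 0 < (1 - x n) ^ b := Real.rpow_pos_of_pos (by linarith) b
      have hab : (1 - x n) ^ b < (x n) ^ b :=
        Real.rpow_lt_rpow (by linarith) (by linarith) hbpos
      have hD : 0 < (x n) ^ b * A h (y n) + (1 - x n) ^ b * B h (y n) :=
        add_pos (mul_pos hpa hApos) (mul_pos hp1a hBpos)
      have hx'r : x (n + 1) < 1 := by
        rw [hxupd n, div_lt_one hD]
        nlinarith [mul_pos hp1a hBpos]
      have hx'l : 1 / 2 < x (n + 1) := by
        rw [hxupd n, lt_div_iff₀ hD]
        nlinarith [mul_pos hpa hApos, mul_pos hp1a hBpos,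
          mul_lt_mul_of_pos_right hab hApos,
          mul_le_mul_of_nonneg_left hAB (le_of_lt hp1a)]
      have hsum : h + 1 = A h (y n) + B h (y n) := by simp only [A, B]; ring
      have hq : A h (y n) / (h + 1) ≤ x (n + 1) := by
        rw [hxupd n, div_le_div_iff₀ (by linarith : (0:ℝ) < h + 1) hD, hsum]
        nlinarith [mul_pos hApos hBpos, hab]
      have hr : 1 / 2 ≤ A h (y n) / (h + 1) := by
        rw [le_div_iff₀ (by linarith : (0:ℝ) < h + 1)]
        simp only [A]
        linarith [mul_le_mul_of_nonneg_left hyl (by linarith : (0:ℝ) ≤ h - 1)]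
      have hy'l : 1 / 2 ≤ y (n + 1) := by
        rw [hyupd n]
        nlinarith [mul_le_mul_of_nonneg_left hr (by linarith : (0:ℝ) ≤ 1 - φ),
          mul_le_mul_of_nonneg_left (le_of_lt hx'l) (le_of_lt hφ0)]
      have hy'r : y (n + 1) ≤ x (n + 1) := by
        rw [hyupd n]
        nlinarith [mul_le_mul_of_nonneg_left hq (by linarith : (0:ℝ) ≤ 1 - φ)]
      exact ⟨⟨hx'l, hx'r⟩, hy'l, hy'r⟩
  -- facts about xhat1
  have hxhpos : (0:ℝ) < xhat1 := by linarith
  have h1xh : (0:ℝ) < 1 - xhat1 := by linarith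
  have hAh : 0 < A h xhat1 := by
    simp only [A]
    nlinarith [mul_pos (by linarith : (0:ℝ) < h - 1) hxhpos]
  have hBh : 0 < B h xhat1 := by
    simp only [B]
    nlinarith [mul_pos (by linarith : (0:ℝ) < h) h1xh]
  have hp : 0 < xhat1 ^ b := Real.rpow_pos_of_pos hxhpos b
  have hq : 0 < (1 - xhat1) ^ b := Real.rpow_pos_of_pos h1xh b
  have hP : 0 < xhat1 ^ (1 - b) := Real.rpow_pos_of_pos hxhpos (1 - b)
  have hQ : 0 < (1 - xhat1) ^ (1 - b) := Real.rpow_pos_of_pos h1xh (1 - b)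
  have hpP : xhat1 ^ b * xhat1 ^ (1 - b) = xhat1 := by
    rw [← Real.rpow_add hxhpos]
    norm_num
  have hqQ : (1 - xhat1) ^ b * (1 - xhat1) ^ (1 - b) = 1 - xhat1 := by
    rw [← Real.rpow_add h1xh]
    norm_num
  have hpq : (1 - xhat1) ^ b < xhat1 ^ b :=
    Real.rpow_lt_rpow (by linarith) (by linarith) hbpos
  have hDh : 0 < xhat1 * (1 - xhat1) ^ (1 - b) - (1 - xhat1) * xhat1 ^ (1 - b) := by
    have e : xhat1 * (1 - xhat1) ^ (1 - b) - (1 - xhat1) * xhat1 ^ (1 - b)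
        = xhat1 ^ (1 - b) * (1 - xhat1) ^ (1 - b) * (xhat1 ^ b - (1 - xhat1) ^ b) := by
      linear_combination (-(1 - xhat1) ^ (1 - b)) * hpP + xhat1 ^ (1 - b) * hqQ
    rw [e]
    exact mul_pos (mul_pos hP hQ) (by linarith)
  have hgxh' : xhat1 ^ (1 - b) - (1 - xhat1) ^ (1 - b)
      = (h - 1) * (xhat1 * (1 - xhat1) ^ (1 - b) - (1 - xhat1) * xhat1 ^ (1 - b)) := by
    rw [g, if_neg (ne_of_gt hxhl)] at hgxh
    exact (div_eq_iff (ne_of_gt hDh)).mp hgxh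
  have key0 : xhat1 ^ (1 - b) * B h xhat1 = (1 - xhat1) ^ (1 - b) * A h xhat1 := by
    simp only [A, B]
    linear_combination hgxh'
  have key : xhat1 * (1 - xhat1) ^ b * B h xhat1 = (1 - xhat1) * xhat1 ^ b * A h xhat1 := by
    linear_combination (-(1 - xhat1) ^ b * B h xhat1) * hpP +
      xhat1 ^ b * A h xhat1 * hqQ + xhat1 ^ b * (1 - xhat1) ^ b * key0
  -- main induction from k
  intro t ht
  induction t, ht using Nat.le_induction with
  | base => exact hk
  | succ n hn ih =>
    obtain ⟨⟨hxl, hxr⟩, hyl, hyr⟩ := inv n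
    have hcxh : y n ≤ xhat1 := by linarith
    have hApos : 0 < A h (y n) := by
      simp only [A]
      nlinarith [mul_pos (by linarith : (0:ℝ) < h - 1) (by linarith : (0:ℝ) < y n)]
    have hBpos : 0 < B h (y n) := by
      simp only [B]
      nlinarith [mul_nonneg (by linarith : (0:ℝ) ≤ h) (by linarith : (0:ℝ) ≤ 1 - y n)]
    have hpa : 0 < (x n) ^ b := Real.rpow_pos_of_pos (by linarith) b
    have hp1a : 0 < (1 - x n) ^ b := Real.rpow_pos_of_pos (by linarith) b
    have hq2 : A h (y n) * B h xhat1 ≤ B h (y n) * A h xhat1 := by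
      have e : B h (y n) * A h xhat1 - A h (y n) * B h xhat1
          = (xhat1 - y n) * ((h - 1) * (h + 1)) := by
        simp only [A, B]; ring
      nlinarith [mul_nonneg (by linarith : (0:ℝ) ≤ xhat1 - y n)
        (by nlinarith : (0:ℝ) ≤ (h - 1) * (h + 1))]
    have hq1 : (x n) ^ b * (1 - xhat1) ^ b < xhat1 ^ b * (1 - x n) ^ b := by
      have h1 : x n * (1 - xhat1) < xhat1 * (1 - x n) := by nlinarith
      have h2 : (x n * (1 - xhat1)) ^ b < (xhat1 * (1 - x n)) ^ b :=
        Real.rpow_lt_rpow (by positivity) h1 hbpos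
      rwa [Real.mul_rpow (by linarith) (by linarith),
        Real.mul_rpow (by linarith) (by linarith)] at h2
    have star : (x n) ^ b * (1 - xhat1) ^ b * (A h (y n) * B h xhat1)
        < xhat1 ^ b * (1 - x n) ^ b * (B h (y n) * A h xhat1) := by
      calc (x n) ^ b * (1 - xhat1) ^ b * (A h (y n) * B h xhat1)
          < xhat1 ^ b * (1 - x n) ^ b * (A h (y n) * B h xhat1) :=
            mul_lt_mul_of_pos_right hq1 (mul_pos hApos hBh)
        _ ≤ xhat1 ^ b * (1 - x n) ^ b * (B h (y n) * A h xhat1) :=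
            mul_le_mul_of_nonneg_left hq2 (le_of_lt (mul_pos hp hp1a))
    have T : (1 - xhat1) * ((x n) ^ b * A h (y n)) < xhat1 * ((1 - x n) ^ b * B h (y n)) := by
      have c0pos : 0 < xhat1 * (1 - xhat1) ^ b * B h xhat1 :=
        mul_pos (mul_pos hxhpos hq) hBh
      have h5 : (1 - xhat1) * ((x n) ^ b * A h (y n)) * (xhat1 * (1 - xhat1) ^ b * B h xhat1)
          < xhat1 * ((1 - x n) ^ b * B h (y n)) * (xhat1 * (1 - xhat1) ^ b * B h xhat1) := by
        calc (1 - xhat1) * ((x n) ^ b * A h (y n)) * (xhat1 * (1 - xhat1) ^ b * B h xhat1)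
            = xhat1 * (1 - xhat1) *
              ((x n) ^ b * (1 - xhat1) ^ b * (A h (y n) * B h xhat1)) := by ring
          _ < xhat1 * (1 - xhat1) *
              (xhat1 ^ b * (1 - x n) ^ b * (B h (y n) * A h xhat1)) :=
              mul_lt_mul_of_pos_left star (mul_pos hxhpos h1xh)
          _ = xhat1 * ((1 - x n) ^ b * B h (y n)) * ((1 - xhat1) * xhat1 ^ b * A h xhat1) := by
              ring
          _ = xhat1 * ((1 - x n) ^ b * B h (y n)) * (xhat1 * (1 - xhat1) ^ b * B h xhat1) := by
              rw [key]
      exact lt_of_mul_lt_mul_right h5 (le_of_lt c0pos)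
    have hD : 0 < (x n) ^ b * A h (y n) + (1 - x n) ^ b * B h (y n) :=
      add_pos (mul_pos hpa hApos) (mul_pos hp1a hBpos)
    rw [hxupd n, div_lt_iff₀ hD]
    nlinarith [T]
end

section
/- Let b ≥ 1, h > 1, x ∈ (1/2, 1), and y ∈ (1/2, 1]. Define the biased-assimilation update x⁺ = x^b·A(y) / (x^b·A(y) + (1-x)^b·B(y)), where A(y) = h·y + 1 - y and B(y) = y + h·(1-y). Then x⁺ - x > x·(1-x)·(x^{b-1} - (1-x)^{b-1}). -/
open Filter Topology

/-- Key increment estimate in the proof of Theorem 2 (extreme bias): for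
`b ≥ 1`, `h > 1`, `x ∈ (1/2,1)` and `y ∈ (1/2,1]`, the biased-assimilation
update `x⁺` satisfies `x⁺ - x > x(1-x)(x^{b-1} - (1-x)^{b-1})`. -/
theorem stmt_17 (b h x y : ℝ)
    (hb : 1 ≤ b) (hh : 1 < h)
    (hx : 1 / 2 < x ∧ x < 1) (hy : 1 / 2 < y ∧ y ≤ 1) :
    x ^ b * A h y / (x ^ b * A h y + (1 - x) ^ b * B h y) - x >
      x * (1 - x) * (x ^ (b - 1) - (1 - x) ^ (b - 1)) := by
  obtain ⟨hx1, hx2⟩ := hx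
  obtain ⟨hy1, hy2⟩ := hy
  have hx0 : (0:ℝ) < x := by linarith
  have h1x : (0:ℝ) < 1 - x := by linarith
  set u := x ^ (b - 1) with hu_def
  set v := (1 - x) ^ (b - 1) with hv_def
  have hu : 0 < u := Real.rpow_pos_of_pos hx0 _
  have hv : 0 < v := Real.rpow_pos_of_pos h1x _
  have huv : v ≤ u := Real.rpow_le_rpow h1x.le (by linarith) (by linarith)
  have hu1 : u ≤ 1 := Real.rpow_le_one hx0.le hx2.le (by linarith)
  have hA : 1 < A h y := by unfold A; nlinarith
  have hB : 1 ≤ B h y := by unfold B; nlinarith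
  have hB0 : 0 < B h y := by linarith
  have hAB : B h y < A h y := by unfold A B; nlinarith
  have hxb : x ^ b = x * u := by
    rw [hu_def, show b = 1 + (b - 1) by ring, Real.rpow_add hx0, Real.rpow_one]
    ring_nf
  have hxb' : (1 - x) ^ b = (1 - x) * v := by
    rw [hv_def, show b = 1 + (b - 1) by ring, Real.rpow_add h1x, Real.rpow_one]
    ring_nf
  rw [hxb, hxb']
  have hD : 0 < x * u * A h y + (1 - x) * v * B h y := by positivity
  rw [gt_iff_lt, lt_sub_iff_add_lt, lt_div_iff₀ hD]
  have key : (u - v) * (x * u * A h y + (1 - x) * v * B h y)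
      < u * A h y - v * B h y := by
    have h1 : x * u * A h y + (1 - x) * v * B h y ≤ u * A h y := by
      nlinarith [mul_le_mul huv hAB.le hB0.le hu.le]
    have h2 : (u - v) * (x * u * A h y + (1 - x) * v * B h y)
        ≤ (u - v) * (u * A h y) :=
      mul_le_mul_of_nonneg_left h1 (by linarith)
    have h3 : (u - v) * (u * A h y) ≤ (u - v) * A h y := by
      nlinarith [mul_nonneg (mul_nonneg (sub_nonneg.mpr huv) (sub_nonneg.mpr hu1))
        (by linarith : (0:ℝ) ≤ A h y)]
    nlinarith [mul_lt_mul_of_pos_left hAB hv]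
  nlinarith [mul_lt_mul_of_pos_left key (mul_pos hx0 h1x)]
end
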